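/- arXiv:2107.11867 — 7 statements merged into one kernel-verified Lean document; each statement's English description precedes it below -/
import Mathlib

section
/- Let $\{X_i : i \in \omega\}$ be a family of infinite sets of finite partial functions from a set $M$ to $\{0,1\}$ (forcing conditions). If there is an $n$ such that every condition in every $X_i$ has domain of cardinality exactly $n$, then there exist indices $i \neq j$ and conditions $p \in X_i$, $q \in X_j$ with $p \neq q$ such that $p$ and $q$ are compatible (i.e., they agree on the intersection of their domains). -/
/-- A forcing condition: a finite partial function from `M` to `{0,1}`, represented as the
(finite) graph of a function into `Bool`. -/
def IsCond {M : Type*} (p : Finset (M × Bool)) : Prop :=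
  ∀ ⦃a : M⦄ ⦃b b' : Bool⦄, (a, b) ∈ p → (a, b') ∈ p → b = b'

/-- Two conditions are compatible if they agree on the intersection of their domains
(equivalently, their union is a function). -/
def Compat {M : Type*} (p q : Finset (M × Bool)) : Prop :=
  ∀ ⦃a : M⦄ ⦃b b' : Bool⦄, (a, b) ∈ p → (a, b') ∈ q → b = b'

/-- The domain of a condition. -/
def condDom {M : Type*} [DecidableEq M] (p : Finset (M × Bool)) : Finset M :=
  p.image Prod.fst

lemma condDom_erase {M : Type*} [DecidableEq M] {q : Finset (M × Bool)} (hq : IsCond q)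
    {a : M} {c : Bool} (hm : (a, c) ∈ q) :
    condDom (q.erase (a, c)) = (condDom q).erase a := by
  ext a'
  simp only [condDom, Finset.mem_image, Finset.mem_erase]
  constructor
  · rintro ⟨⟨x, b⟩, ⟨hne, hxq⟩, rfl⟩
    refine ⟨?_, ⟨(x, b), hxq, rfl⟩⟩
    intro hxa
    subst hxa
    exact hne (by rw [hq hxq hm])
  · rintro ⟨hne, ⟨x, b⟩, hxq, rfl⟩
    exact ⟨(x, b), ⟨fun h => hne (congrArg Prod.fst h), hxq⟩, rfl⟩

/-- Any infinite set of conditions, all with domain of cardinality `n`, contains two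
distinct compatible conditions. -/
lemma exists_compat {M : Type*} [DecidableEq M] (n : ℕ) :
    ∀ S : Set (Finset (M × Bool)), S.Infinite → (∀ p ∈ S, IsCond p) →
    (∀ p ∈ S, (condDom p).card = n) →
    ∃ p ∈ S, ∃ q ∈ S, p ≠ q ∧ Compat p q := by
  induction n with
  | zero =>
    intro S hinf hcond hcard
    exfalso
    apply hinf
    refine (Set.finite_singleton (∅ : Finset (M × Bool))).subset ?_
    intro p hp
    have h0 := hcard p hp
    have hdom : condDom p = ∅ := Finset.card_eq_zero.mp h0
    have : p = ∅ := by
      refine Finset.eq_empty_iff_forall_notMem.mpr ?_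
      rintro ⟨a, b⟩ hab
      have : a ∈ condDom p := Finset.mem_image.mpr ⟨(a, b), hab, rfl⟩
      simp [hdom] at this
    simp [this]
  | succ n ih =>
    intro S hinf hcond hcard
    by_contra hcon
    push_neg at hcon
    -- hcon : ∀ p ∈ S, ∀ q ∈ S, p ≠ q → ¬Compat p q
    obtain ⟨p₀, hp₀⟩ := hinf.nonempty
    set F : Finset (M × Bool) := p₀.image (fun y => (y.1, !y.2)) with hF
    -- every q ∈ S other than p₀ contains some element of F
    have hsub : S \ {p₀} ⊆ ⋃ x ∈ (F : Set (M × Bool)), {q | q ∈ S ∧ x ∈ q} := by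
      rintro q ⟨hqS, hqne⟩
      have hqne' : p₀ ≠ q := fun h => hqne (by simp [h.symm])
      have hnc : ¬ Compat p₀ q := hcon p₀ hp₀ q hqS hqne'
      have hex : ∃ a b b', (a, b) ∈ p₀ ∧ (a, b') ∈ q ∧ b ≠ b' := by
        by_contra hh
        apply hnc
        intro a b b' h1 h2
        by_contra hne
        exact hh ⟨a, b, b', h1, h2, hne⟩
      obtain ⟨a, b, b', h1, h2, hbb⟩ := hex
      have hb' : b' = !b := by cases b <;> cases b' <;> simp_all
      refine Set.mem_biUnion (show (a, !b) ∈ (F : Set (M × Bool)) from ?_) ⟨hqS, hb' ▸ h2⟩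
      simp only [hF, Finset.coe_image, Set.mem_image, Finset.mem_coe]
      exact ⟨(a, b), h1, rfl⟩
    -- pigeonhole: some x ∈ F is contained in infinitely many q ∈ S
    have hpig : ∃ x ∈ (F : Set (M × Bool)), {q | q ∈ S ∧ x ∈ q}.Infinite := by
      by_contra hh
      push_neg at hh
      have hfin : (⋃ x ∈ (F : Set (M × Bool)), {q | q ∈ S ∧ x ∈ q}).Finite :=
        Set.Finite.biUnion F.finite_toSet
          (fun x hx => hh x hx)
      exact (hinf.diff (Set.finite_singleton p₀)) (hfin.subset hsub)
    obtain ⟨⟨a, c⟩, _, hTinf⟩ := hpig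
    set T : Set (Finset (M × Bool)) := {q | q ∈ S ∧ (a, c) ∈ q} with hT
    set S' : Set (Finset (M × Bool)) := (fun q => q.erase (a, c)) '' T with hS'
    have hinj : Set.InjOn (fun q => q.erase (a, c)) T := by
      intro q1 h1 q2 h2 he
      have : insert (a, c) (q1.erase (a, c)) = insert (a, c) (q2.erase (a, c)) := by
        simp only at he; rw [he]
      rwa [Finset.insert_erase h1.2, Finset.insert_erase h2.2] at this
    have hS'inf : S'.Infinite := hTinf.image hinj
    have hS'cond : ∀ p ∈ S', IsCond p := by
      rintro _ ⟨q, hq, rfl⟩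
      intro x b b' h1 h2
      exact hcond q hq.1 (Finset.erase_subset _ _ h1) (Finset.erase_subset _ _ h2)
    have hS'card : ∀ p ∈ S', (condDom p).card = n := by
      rintro _ ⟨q, hq, rfl⟩
      have hdom : condDom (q.erase (a, c)) = (condDom q).erase a :=
        condDom_erase (hcond q hq.1) hq.2
      have hmema : a ∈ condDom q := Finset.mem_image.mpr ⟨(a, c), hq.2, rfl⟩
      simp only [hdom, Finset.card_erase_of_mem hmema, hcard q hq.1]
      omega
    obtain ⟨p', hp', q', hq', hne', hcompat'⟩ := ih S' hS'inf hS'cond hS'card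
    obtain ⟨q1, hq1, rfl⟩ := hp'
    obtain ⟨q2, hq2, rfl⟩ := hq'
    have hq12 : q1 ≠ q2 := fun h => hne' (by rw [h])
    apply hcon q1 hq1.1 q2 hq2.1 hq12
    intro a' b b' h1 h2
    by_cases ha : a' = a
    · subst ha
      have hb : b = c := hcond q1 hq1.1 h1 hq1.2
      have hb' : b' = c := hcond q2 hq2.1 h2 hq2.2
      rw [hb, hb']
    · exact hcompat'
        (Finset.mem_erase.mpr ⟨fun h => ha (congrArg Prod.fst h), h1⟩)
        (Finset.mem_erase.mpr ⟨fun h => ha (congrArg Prod.fst h), h2⟩)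

-- A system of distinct representatives for an ℕ-indexed family of infinite sets.
open Classical in
private noncomputable def reps {α : Type*} (X : ℕ → Set α) (hinf : ∀ i, (X i).Infinite) :
    ℕ → α
  | i =>
    ((hinf i).exists_notMem_finset
      ((Finset.range i).attach.image (fun j => reps X hinf j.1))).choose
  termination_by i => i
  decreasing_by all_goals exact Finset.mem_range.mp j.2

open Classical in
private lemma reps_spec {α : Type*} (X : ℕ → Set α) (hinf : ∀ i, (X i).Infinite) (i : ℕ) :
    reps X hinf i ∈ X i ∧
      reps X hinf i ∉ (Finset.range i).attach.image (fun j => reps X hinf j.1) := by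
  rw [reps]
  exact ((hinf i).exists_notMem_finset _).choose_spec

private lemma reps_mem {α : Type*} (X : ℕ → Set α) (hinf : ∀ i, (X i).Infinite) (i : ℕ) :
    reps X hinf i ∈ X i := (reps_spec X hinf i).1

private lemma reps_injective {α : Type*} (X : ℕ → Set α) (hinf : ∀ i, (X i).Infinite) :
    Function.Injective (reps X hinf) := by
  have key : ∀ i j, j < i → reps X hinf i ≠ reps X hinf j := by
    intro i j hji heq
    apply (reps_spec X hinf i).2
    classical
    refine Finset.mem_image.mpr ⟨⟨j, Finset.mem_range.mpr hji⟩, Finset.mem_attach _ _, ?_⟩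
    exact heq.symm
  intro i j h
  rcases lt_trichotomy i j with hlt | heq | hlt
  · exact absurd h.symm (key j i hlt)
  · exact heq
  · exact absurd h (key i j hlt)

/-- If `{Xᵢ : i ∈ ω}` is a family of infinite sets of forcing conditions, all of whose members
have domains of cardinality exactly `n`, then there are `i ≠ j` and distinct compatible
conditions `p ∈ Xᵢ`, `q ∈ Xⱼ`. -/
theorem infinite_family_compat {M : Type*} [DecidableEq M]
    (X : ℕ → Set (Finset (M × Bool))) (n : ℕ)
    (hcond : ∀ i, ∀ p ∈ X i, IsCond p)
    (hinf : ∀ i, (X i).Infinite)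
    (hcard : ∀ i, ∀ p ∈ X i, (condDom p).card = n) :
    ∃ i j : ℕ, i ≠ j ∧ ∃ p ∈ X i, ∃ q ∈ X j, p ≠ q ∧ Compat p q := by
  set f := reps X hinf with hf
  have hfmem : ∀ i, f i ∈ X i := reps_mem X hinf
  have hfinj : Function.Injective f := reps_injective X hinf
  have hrange : (Set.range f).Infinite := Set.infinite_range_of_injective hfinj
  obtain ⟨p, hp, q, hq, hpq, hcompat⟩ :=
    exists_compat n (Set.range f) hrange
      (by rintro _ ⟨i, rfl⟩; exact hcond i _ (hfmem i))
      (by rintro _ ⟨i, rfl⟩; exact hcard i _ (hfmem i))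
  obtain ⟨i, rfl⟩ := hp
  obtain ⟨j, rfl⟩ := hq
  exact ⟨i, j, fun h => hpq (by rw [h]), f i, hfmem i, f j, hfmem j, hpq, hcompat⟩
end

section
/- If $Z$ is an infinite set of finite partial functions from a set $M$ to $\{0,1\}$, all with domains of the same finite cardinality $n$, then there exist $p \neq q$ in $Z$ that are compatible. -/
lemma compat_aux {M : Type*} [DecidableEq M] :
    ∀ n (Z : Set (Finset (M × Bool))),
    (∀ p ∈ Z, IsCond p) → Z.Infinite → (∀ p ∈ Z, (condDom p).card = n) →
    ∃ p ∈ Z, ∃ q ∈ Z, p ≠ q ∧ Compat p q := by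
  intro n
  induction n with
  | zero =>
    intro Z hcond hinf hcard
    exfalso
    apply hinf
    apply Set.Finite.subset (Set.finite_singleton (∅ : Finset (M × Bool)))
    intro p hp
    have := hcard p hp
    simp only [Finset.card_eq_zero, condDom, Finset.image_eq_empty] at this
    simp [this]
  | succ n ih =>
    intro Z hcond hinf hcard
    by_cases hc : ∃ ab : M × Bool, {q | q ∈ Z ∧ ab ∈ q}.Infinite
    · obtain ⟨⟨a, b⟩, hab⟩ := hc
      set Z₁ : Set (Finset (M × Bool)) := {q | q ∈ Z ∧ (a, b) ∈ q} with hZ₁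
      set f : Finset (M × Bool) → Finset (M × Bool) := fun q => q.erase (a, b) with hf
      have hinjOn : Set.InjOn f Z₁ := by
        intro q₁ h₁ q₂ h₂ h
        have := congrArg (insert (a, b)) h
        rwa [hf, Finset.insert_erase h₁.2, Finset.insert_erase h₂.2] at this
      have hinf' : (f '' Z₁).Infinite := hab.image hinjOn
      have hdom : ∀ q ∈ Z₁, condDom (f q) = (condDom q).erase a := by
        intro q hq
        ext x
        simp only [condDom, Finset.mem_image, Finset.mem_erase, hf, Finset.mem_erase]
        constructor
        · rintro ⟨⟨y, c⟩, ⟨hne, hmem⟩, rfl⟩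
          refine ⟨?_, ⟨(y, c), hmem, rfl⟩⟩
          rintro rfl
          exact hne (by rw [hcond q hq.1 hmem hq.2])
        · rintro ⟨hxa, ⟨y, c⟩, hmem, rfl⟩
          exact ⟨(y, c), ⟨by rintro h; exact hxa (congrArg Prod.fst h), hmem⟩, rfl⟩
      have hcond' : ∀ p ∈ f '' Z₁, IsCond p := by
        rintro _ ⟨q, hq, rfl⟩ x c c' h1 h2
        exact hcond q hq.1 (Finset.mem_of_mem_erase h1) (Finset.mem_of_mem_erase h2)
      have hcard' : ∀ p ∈ f '' Z₁, (condDom p).card = n := by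
        rintro _ ⟨q, hq, rfl⟩
        have hmem : a ∈ condDom q := Finset.mem_image_of_mem Prod.fst hq.2
        rw [hdom q hq, Finset.card_erase_of_mem hmem, hcard q hq.1]; rfl
      obtain ⟨p', hp', q', hq', hne', hcompat'⟩ := ih (f '' Z₁) hcond' hinf' hcard'
      obtain ⟨p₁, hp₁, rfl⟩ := hp'
      obtain ⟨q₁, hq₁, rfl⟩ := hq'
      refine ⟨p₁, hp₁.1, q₁, hq₁.1, fun h => hne' (by rw [h]), ?_⟩
      intro x c c' h1 h2
      by_cases hx : x = a
      · subst hx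
        rw [hcond p₁ hp₁.1 h1 hp₁.2, hcond q₁ hq₁.1 h2 hq₁.2]
      · exact hcompat' (Finset.mem_erase.2 ⟨fun h => hx (congrArg Prod.fst h), h1⟩)
          (Finset.mem_erase.2 ⟨fun h => hx (congrArg Prod.fst h), h2⟩)
    · push_neg at hc
      obtain ⟨p, hp⟩ := hinf.nonempty
      have hBad : (⋃ ab ∈ (p : Set (M × Bool)), {q | q ∈ Z ∧ (ab.1, !ab.2) ∈ q}).Finite :=
        Set.Finite.biUnion p.finite_toSet (fun ab _ => hc (ab.1, !ab.2))
      have := hinf.diff (hBad.union (Set.finite_singleton p))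
      obtain ⟨q, hq⟩ := this.nonempty
      simp only [Set.mem_diff, Set.mem_union, Set.mem_singleton_iff, not_or] at hq
      refine ⟨p, hp, q, hq.1, fun h => hq.2.2 h.symm, ?_⟩
      intro x c c' h1 h2
      by_contra hne
      apply hq.2.1
      refine Set.mem_biUnion (Finset.mem_coe.2 h1) ⟨hq.1, ?_⟩
      have : c' = !c := by revert hne; cases c <;> cases c' <;> simp
      rwa [this] at h2


/-- If `Z` is an infinite set of forcing conditions all with domains of the same finite
cardinality `n`, then `Z` contains two distinct compatible conditions. -/
theorem infinite_set_compat {M : Type*} [DecidableEq M]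
    (Z : Set (Finset (M × Bool))) (n : ℕ)
    (hcond : ∀ p ∈ Z, IsCond p)
    (hinf : Z.Infinite)
    (hcard : ∀ p ∈ Z, (condDom p).card = n) :
    ∃ p ∈ Z, ∃ q ∈ Z, p ≠ q ∧ Compat p q := by
  exact compat_aux n Z hcond hinf hcard
end

section
/- In a nonstandard model $\mathcal{M} \models \mathsf{PA}$, if $X, Y \subseteq M$ satisfy $X \setminus \omega = Y \setminus \omega$ (they agree on all nonstandard elements), then $X$ is strongly CP-generic if and only if $Y$ is strongly CP-generic. -/
open FirstOrder Language Set

open FirstOrder Language Set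

/-- The first-order language of arithmetic: constants 0, 1; binary functions + , * ;
binary relation < . -/
abbrev Larith : FirstOrder.Language :=
  ⟨fun n => match n with
    | 0 => Fin 2
    | 2 => Fin 2
    | _ => Empty,
   fun n => match n with
    | 2 => Unit
    | _ => Empty⟩

/-- The data of an interpretation of the language of arithmetic. -/
class ArithData (M : Type*) extends Zero M, One M, Add M, Mul M, LT M

instance arithStructure (M : Type*) [ArithData M] : Larith.Structure M where
  funMap {n} f x :=
    match n, f with
    | 0, c => if @Eq (Fin 2) c 0 then (0 : M) else 1
    | 2, f => if @Eq (Fin 2) f 0 then x 0 + x 1 else x 0 * x 1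
  RelMap {n} r x :=
    match n, r with
    | 2, _ => x 0 < x 1

/-- The canonical embedding of the standard natural numbers. Its range is the standard cut ω. -/
def std (M : Type*) [ArithData M] : ℕ → M
  | 0 => 0
  | n + 1 => std M n + 1

/-- A semantic rendering of "`M ⊨ PA`": the basic axioms of a discretely ordered commutative
semiring together with the induction scheme for all parametrically definable sets. -/
def IsPAModel (M : Type*) [ArithData M] : Prop :=
  (∀ x y z : M, x + (y + z) = (x + y) + z) ∧
  (∀ x y : M, x + y = y + x) ∧
  (∀ x : M, x + 0 = x) ∧
  (∀ x y z : M, x * (y * z) = (x * y) * z) ∧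
  (∀ x y : M, x * y = y * x) ∧
  (∀ x : M, x * 1 = x) ∧
  (∀ x : M, x * 0 = 0) ∧
  (∀ x y z : M, x * (y + z) = x * y + x * z) ∧
  (∀ x y z : M, x < y → y < z → x < z) ∧
  (∀ x : M, ¬ x < x) ∧
  (∀ x y : M, x < y ∨ x = y ∨ y < x) ∧
  (∀ x y z : M, x < y → x + z < y + z) ∧
  (∀ x y z : M, x + z = y + z → x = y) ∧
  ((0 : M) < 1) ∧
  (∀ x : M, x = 0 ∨ 0 < x) ∧
  (∀ x y : M, x < y → (x + 1 = y ∨ x + 1 < y)) ∧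
  (∀ x y : M, x < y → ∃ z : M, x + z = y) ∧
  (∀ S : Set (Fin 1 → M), Set.Definable (Set.univ : Set M) Larith S →
    (fun _ => (0 : M)) ∈ S →
    (∀ x : M, (fun _ => x) ∈ S → (fun _ => x + 1) ∈ S) →
    ∀ x : M, (fun _ => x) ∈ S)

/-- The Skolem closure (= definable closure) of a set of parameters in a model of PA:
the set of elements definable (as singletons) from parameters in `A`. -/
def Scl (M : Type*) [ArithData M] (A : Set M) : Set M :=
  { x | Set.Definable A Larith ({ f | f 0 = x } : Set (Fin 1 → M)) }

/-- `X` is CP-generic (Chatzidakis–Pillay generic): for every set `D ⊆ Mⁿ` definable using only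
the parameter `a` and every `I ⊆ {1,…,n}`, if `D` contains a tuple of pairwise distinct elements
all lying outside `Scl(a)`, then `D` contains a tuple whose entries lie in `X` exactly at the
positions in `I`. -/
def CPGeneric (M : Type*) [ArithData M] (X : Set M) : Prop :=
  ∀ (n : ℕ) (a : M) (D : Set (Fin n → M)), Set.Definable ({a} : Set M) Larith D →
    ∀ I : Set (Fin n),
      (∃ b : Fin n → M, b ∈ D ∧ Function.Injective b ∧ ∀ i, b i ∉ Scl M {a}) →
      ∃ b : Fin n → M, b ∈ D ∧ ∀ i, (b i ∈ X ↔ i ∈ I)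

/-- `X` is strongly CP-generic: for every definable `D ⊆ Mⁿ` (any parameters) containing an
infinite family of injective tuples with pairwise disjoint coordinate sets, and every
`I ⊆ {1,…,n}`, `D` contains a tuple whose entries lie in `X` exactly at positions in `I`. -/
def StrongCPGeneric (M : Type*) [ArithData M] (X : Set M) : Prop :=
  ∀ (n : ℕ) (D : Set (Fin n → M)), Set.Definable (Set.univ : Set M) Larith D →
    ∀ I : Set (Fin n),
      (∃ B : Set (Fin n → M), B ⊆ D ∧ B.Infinite ∧ (∀ b ∈ B, Function.Injective b) ∧
        (∀ b ∈ B, ∀ c ∈ B, b ≠ c → ∀ i j, b i ≠ c j)) →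
      ∃ b : Fin n → M, b ∈ D ∧ ∀ i, (b i ∈ X ↔ i ∈ I)

set_option linter.unusedSectionVars false
namespace SCPAux

structure PAx (M : Type*) [ArithData M] : Prop where
  addAs : ∀ x y z : M, x + (y + z) = (x + y) + z
  addC : ∀ x y : M, x + y = y + x
  add0 : ∀ x : M, x + 0 = x
  mulAs : ∀ x y z : M, x * (y * z) = (x * y) * z
  mulC : ∀ x y : M, x * y = y * x
  mul1 : ∀ x : M, x * 1 = x
  mul0 : ∀ x : M, x * 0 = 0
  dist : ∀ x y z : M, x * (y + z) = x * y + x * z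
  ltT : ∀ x y z : M, x < y → y < z → x < z
  ltI : ∀ x : M, ¬ x < x
  tri : ∀ x y : M, x < y ∨ x = y ∨ y < x
  addLt : ∀ x y z : M, x < y → x + z < y + z
  addCan : ∀ x y z : M, x + z = y + z → x = y
  zlto : (0 : M) < 1
  posOr : ∀ x : M, x = 0 ∨ 0 < x
  disc : ∀ x y : M, x < y → (x + 1 = y ∨ x + 1 < y)
  subE : ∀ x y : M, x < y → ∃ z : M, x + z = y
  ind : ∀ S : Set (Fin 1 → M), Set.Definable (Set.univ : Set M) Larith S →
    (fun _ => (0 : M)) ∈ S → (∀ x : M, (fun _ => x) ∈ S → (fun _ => x + 1) ∈ S) →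
    ∀ x : M, (fun _ => x) ∈ S

theorem pax_of_isPAModel {M : Type*} [ArithData M] (h : IsPAModel M) : PAx M := by
  obtain ⟨h1,h2,h3,h4,h5,h6,h7,h8,h9,h10,h11,h12,h13,h14,h15,h16,h17,h18⟩ := h
  exact ⟨h1,h2,h3,h4,h5,h6,h7,h8,h9,h10,h11,h12,h13,h14,h15,h16,h17,h18⟩

variable {M : Type*} [ArithData M]

/-- non-strict order -/
def le (x y : M) : Prop := x < y ∨ x = y

namespace PAx

variable (h : PAx M)
include h

theorem le_refl (x : M) : le x x := Or.inr rfl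
theorem le_of_lt {x y : M} (hx : x < y) : le x y := Or.inl hx
theorem le_of_eq {x y : M} (hx : x = y) : le x y := Or.inr hx

theorem lt_of_lt_of_le {x y z : M} (h1 : x < y) (h2 : le y z) : x < z := by
  rcases h2 with h2 | rfl
  · exact h.ltT _ _ _ h1 h2
  · exact h1

theorem lt_of_le_of_lt {x y z : M} (h1 : le x y) (h2 : y < z) : x < z := by
  rcases h1 with h1 | rfl
  · exact h.ltT _ _ _ h1 h2
  · exact h2

theorem le_trans {x y z : M} (h1 : le x y) (h2 : le y z) : le x z := by
  rcases h1 with h1 | rfl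
  · exact Or.inl (h.lt_of_lt_of_le h1 h2)
  · exact h2

theorem ne_of_lt {x y : M} (h1 : x < y) : x ≠ y := by
  rintro rfl; exact h.ltI _ h1

theorem not_lt_of_lt {x y : M} (h1 : x < y) : ¬ y < x := fun h2 => h.ltI x (h.ltT _ _ _ h1 h2)

theorem add0' (x : M) : 0 + x = x := by rw [h.addC]; exact h.add0 x

theorem addLt' (x y z : M) (h1 : x < y) : z + x < z + y := by
  rw [h.addC z x, h.addC z y]; exact h.addLt _ _ _ h1

theorem addCan' {x y z : M} (h1 : z + x = z + y) : x = y := by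
  apply h.addCan x y z
  rw [h.addC x z, h.addC y z]; exact h1

theorem zero_le (x : M) : le (0 : M) x := by
  rcases h.posOr x with rfl | hx
  · exact Or.inr rfl
  · exact Or.inl hx

theorem le_add_right (a b : M) : le a (a + b) := by
  rcases h.posOr b with rfl | hb
  · exact Or.inr (h.add0 a).symm
  · left
    have := h.addLt 0 b a hb
    rwa [h.add0' a, h.addC b a] at this

theorem le_add_left (a b : M) : le a (b + a) := by rw [h.addC]; exact h.le_add_right a b

theorem lt_add_one (x : M) : x < x + 1 := by
  have := h.addLt 0 1 x h.zlto
  rwa [h.add0' x, h.addC 1 x] at this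

theorem not_lt_zero (x : M) : ¬ x < 0 := by
  intro hx
  rcases h.posOr x with rfl | hpos
  · exact h.ltI _ hx
  · exact h.ltI _ (h.ltT _ _ _ hpos hx)

theorem one_le_of_pos {x : M} (hx : 0 < x) : le (1 : M) x := by
  rcases h.disc 0 x hx with h1 | h1
  · right; rw [← h1, h.add0']
  · left; rw [← h.add0' 1]; exact h1

theorem le_iff_not_lt {x y : M} : le x y ↔ ¬ y < x := by
  constructor
  · intro h1 h2
    exact h.ltI _ (h.lt_of_le_of_lt h1 h2)
  · intro h1
    rcases h.tri x y with h2 | h2 | h2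
    · exact Or.inl h2
    · exact Or.inr h2
    · exact absurd h2 h1

theorem subE' {x y : M} (h1 : le x y) : ∃ z, x + z = y := by
  rcases h1 with h1 | rfl
  · exact h.subE _ _ h1
  · exact ⟨0, h.add0 x⟩

theorem add_le_add_right {x y : M} (z : M) (h1 : le x y) : le (x + z) (y + z) := by
  rcases h1 with h1 | rfl
  · exact Or.inl (h.addLt _ _ _ h1)
  · exact Or.inr rfl

theorem add_le_add_left {x y : M} (z : M) (h1 : le x y) : le (z + x) (z + y) := by
  rw [h.addC z x, h.addC z y]; exact h.add_le_add_right z h1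

theorem add_le_add {x y u v : M} (h1 : le x y) (h2 : le u v) : le (x + u) (y + v) :=
  h.le_trans (h.add_le_add_right u h1) (h.add_le_add_left y h2)

theorem dist' (x y z : M) : (x + y) * z = x * z + y * z := by
  rw [h.mulC (x+y) z, h.dist, h.mulC z x, h.mulC z y]

theorem mul0' (x : M) : 0 * x = 0 := by rw [h.mulC]; exact h.mul0 x
theorem mul1' (x : M) : 1 * x = x := by rw [h.mulC]; exact h.mul1 x

theorem mul_le_mul_right {x y : M} (z : M) (h1 : le x y) : le (x * z) (y * z) := by
  obtain ⟨d, rfl⟩ := h.subE' h1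
  rw [h.dist']
  exact h.le_add_right _ _

theorem mul_le_mul_left {x y : M} (z : M) (h1 : le x y) : le (z * x) (z * y) := by
  rw [h.mulC z x, h.mulC z y]; exact h.mul_le_mul_right z h1

theorem mul_le_mul {x y u v : M} (h1 : le x y) (h2 : le u v) : le (x * u) (y * v) :=
  h.le_trans (h.mul_le_mul_right u h1) (h.mul_le_mul_left y h2)

theorem mul_pos {x y : M} (hx : 0 < x) (hy : 0 < y) : 0 < x * y := by
  have h1 : le 1 x := h.one_le_of_pos hx
  have h2 : le 1 y := h.one_le_of_pos hy
  have := h.mul_le_mul h1 h2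
  rw [h.mul1 1] at this
  exact h.lt_of_lt_of_le h.zlto this

theorem add_pos_left {x : M} (y : M) (hx : 0 < x) : 0 < x + y :=
  h.lt_of_lt_of_le hx (h.le_add_right x y)

theorem eq_zero_of_add_eq_zero {x y : M} (hxy : x + y = 0) : x = 0 ∧ y = 0 := by
  rcases h.posOr x with rfl | hx
  · refine ⟨rfl, ?_⟩
    rwa [h.add0'] at hxy
  · exfalso
    have := h.add_pos_left y hx
    rw [hxy] at this
    exact h.ltI _ this

end PAx

end SCPAux
namespace SCPAux
variable {M : Type*} [ArithData M]
namespace PAx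
variable (h : PAx M)
include h

/-- commutative semiring structure derived from the axioms, to enable `ring`. -/
abbrev toCS : CommSemiring M where
  add := (· + ·)
  add_assoc := fun a b c => (h.addAs a b c).symm
  zero := 0
  zero_add := h.add0'
  add_zero := h.add0
  add_comm := h.addC
  mul := (· * ·)
  mul_assoc := fun a b c => (h.mulAs a b c).symm
  one := 1
  one_mul := h.mul1'
  mul_one := h.mul1
  mul_comm := h.mulC
  left_distrib := h.dist
  right_distrib := h.dist'
  zero_mul := h.mul0'
  mul_zero := h.mul0
  nsmul := nsmulRec
  npow := npowRec

/-! ### standard numerals -/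

omit h in
theorem std_zero : std M 0 = 0 := rfl
omit h in
theorem std_succ (k : ℕ) : std M (k+1) = std M k + 1 := rfl

theorem std_one : std M 1 = 1 := by
  show (0 : M) + 1 = 1
  rw [h.add0']

theorem std_add (a b : ℕ) : std M (a + b) = std M a + std M b := by
  induction b with
  | zero => rw [Nat.add_zero, std_zero, h.add0]
  | succ b ih =>
    rw [← Nat.add_assoc, std_succ, std_succ, ih, h.addAs]

theorem std_mul (a b : ℕ) : std M (a * b) = std M a * std M b := by
  letI := h.toCS
  induction b with
  | zero => rw [Nat.mul_zero, std_zero, h.mul0]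
  | succ b ih =>
    rw [Nat.mul_succ, h.std_add, std_succ, ih]
    ring

theorem std_lt_std {a b : ℕ} (hab : a < b) : std M a < std M b := by
  induction b with
  | zero => omega
  | succ b ih =>
    rw [std_succ]
    rcases Nat.lt_or_ge a b with h1 | h1
    · exact h.ltT _ _ _ (ih h1) (h.lt_add_one _)
    · have : a = b := by omega
      subst this
      exact h.lt_add_one _

theorem std_inj {a b : ℕ} (hab : std M a = std M b) : a = b := by
  rcases Nat.lt_trichotomy a b with h1 | h1 | h1
  · exact absurd hab (h.ne_of_lt (h.std_lt_std h1))
  · exact h1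
  · exact absurd hab.symm (h.ne_of_lt (h.std_lt_std h1))

theorem lt_std {x : M} {k : ℕ} (hx : x < std M k) : ∃ j, j < k ∧ x = std M j := by
  induction k with
  | zero => exact absurd hx (h.not_lt_zero x)
  | succ k ih =>
    rcases h.tri x (std M k) with h1 | h1 | h1
    · obtain ⟨j, hj, rfl⟩ := ih h1
      exact ⟨j, by omega, rfl⟩
    · exact ⟨k, by omega, h1⟩
    · exfalso
      rw [std_succ] at hx
      rcases h.disc _ _ h1 with h2 | h2
      · rw [← h2] at hx
        exact h.ltI _ hx
      · exact h.ltI _ (h.ltT _ _ _ hx h2)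

theorem mem_range_std_of_le {x : M} {k : ℕ} (hx : le x (std M k)) : x ∈ Set.range (std M) := by
  rcases hx with hx | rfl
  · obtain ⟨j, _, rfl⟩ := h.lt_std hx
    exact ⟨j, rfl⟩
  · exact ⟨k, rfl⟩

theorem std_lt_of_nonstd {c : M} (hc : c ∉ Set.range (std M)) (k : ℕ) : std M k < c := by
  by_contra hlt
  exact hc (h.mem_range_std_of_le (h.le_iff_not_lt.mpr hlt))

/-! ### divisibility and congruence -/

theorem dvd_le {d z : M} (hd : ∃ e, z = d * e) (hz : z ≠ 0) : le d z := by
  obtain ⟨e, rfl⟩ := hd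
  rcases h.posOr e with rfl | he
  · exact absurd (h.mul0 d) hz
  · have : le (d * 1) (d * e) := h.mul_le_mul_left d (h.one_le_of_pos he)
    rwa [h.mul1] at this

end PAx

/-- congruence mod d -/
def Cong (d a b : M) : Prop := ∃ u v, a + u * d = b + v * d

namespace PAx
variable (h : PAx M)
include h

omit h in
theorem cong_refl (d a : M) : Cong d a a := ⟨0, 0, rfl⟩

omit h in
theorem cong_of_eq {d a b : M} (hab : a = b) : Cong d a b := ⟨0, 0, by rw [hab]⟩

omit h in
theorem cong_symm {d a b : M} (hc : Cong d a b) : Cong d b a := by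
  obtain ⟨u, v, huv⟩ := hc
  exact ⟨v, u, huv.symm⟩

theorem cong_trans {d a b c : M} (h1 : Cong d a b) (h2 : Cong d b c) : Cong d a c := by
  letI := h.toCS
  obtain ⟨u, v, huv⟩ := h1
  obtain ⟨u', v', huv'⟩ := h2
  refine ⟨u + u', v' + v, ?_⟩
  have key2 : (a + (u + u') * d) + (b + v * d) = (c + (v' + v) * d) + (b + v * d) := by
    calc (a + (u + u') * d) + (b + v * d) = (a + u * d) + (b + u' * d) + v * d := by ring
      _ = (b + v * d) + (c + v' * d) + v * d := by rw [huv, huv']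
      _ = (c + (v' + v) * d) + (b + v * d) := by ring
  exact h.addCan _ _ _ key2

theorem cong_add {d a b a' b' : M} (h1 : Cong d a b) (h2 : Cong d a' b') :
    Cong d (a + a') (b + b') := by
  letI := h.toCS
  obtain ⟨u, v, huv⟩ := h1
  obtain ⟨u', v', huv'⟩ := h2
  refine ⟨u + u', v + v', ?_⟩
  calc a + a' + (u + u') * d = (a + u * d) + (a' + u' * d) := by ring
    _ = (b + v * d) + (b' + v' * d) := by rw [huv, huv']
    _ = b + b' + (v + v') * d := by ring

theorem cong_mul_right {d a b : M} (c : M) (h1 : Cong d a b) : Cong d (a * c) (b * c) := by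
  letI := h.toCS
  obtain ⟨u, v, huv⟩ := h1
  refine ⟨u * c, v * c, ?_⟩
  calc a * c + u * c * d = (a + u * d) * c := by ring
    _ = (b + v * d) * c := by rw [huv]
    _ = b * c + v * c * d := by ring

theorem cong_mul {d a b a' b' : M} (h1 : Cong d a b) (h2 : Cong d a' b') :
    Cong d (a * a') (b * b') := by
  refine h.cong_trans (h.cong_mul_right a' h1) ?_
  rw [h.mulC b a', h.mulC b b']
  exact h.cong_mul_right b h2

theorem cong_zero_iff_dvd {d a : M} : Cong d a 0 ↔ ∃ e, a = d * e := by
  letI := h.toCS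
  constructor
  · rintro ⟨u, v, huv⟩
    rw [h.add0'] at huv
    rcases h.tri u v with h1 | h1 | h1
    · obtain ⟨w, hw⟩ := h.subE _ _ h1
      refine ⟨w, ?_⟩
      have key : a + u * d = w * d + u * d := by
        rw [huv, ← hw]; ring
      have := h.addCan _ _ _ key
      rw [this]; ring
    · subst h1
      have : a + u * d = 0 + u * d := by rw [huv, h.add0']
      have := h.addCan _ _ _ this
      exact ⟨0, by rw [this, h.mul0]⟩
    · obtain ⟨w, hw⟩ := h.subE _ _ h1
      have key : (a + w * d) + v * d = 0 + v * d := by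
        rw [h.add0']
        calc (a + w * d) + v * d = a + u * d := by rw [← hw]; ring
          _ = v * d := huv
      have h3 := h.addCan _ _ _ key
      have h4 := (h.eq_zero_of_add_eq_zero h3).1
      exact ⟨0, by rw [h4, h.mul0]⟩
  · rintro ⟨e, rfl⟩
    refine ⟨0, e, ?_⟩
    rw [h.mul0', h.add0, h.add0', h.mulC d e]

theorem cong_cancel_zero {d a z : M} (h1 : Cong d (a + z) 0) (h2 : Cong d a 0) :
    Cong d z 0 := by
  letI := h.toCS
  obtain ⟨u, v, huv⟩ := h1
  obtain ⟨u', v', huv'⟩ := h2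
  rw [h.add0'] at huv huv'
  refine ⟨u + v', v + u', ?_⟩
  rw [h.add0']
  apply h.addCan _ _ a
  calc z + (u + v') * d + a = (a + z + u * d) + v' * d := by ring
    _ = v * d + v' * d := by rw [huv]
    _ = v * d + (a + u' * d) := by rw [huv']
    _ = (v + u') * d + a := by ring

end PAx
end SCPAux
namespace SCPAux
variable {M : Type*} [ArithData M]

/-- pairing function -/
def pr (x y : M) : M := (x + y) * (x + y) + (x + 1)

/-- powers -/
def powM (x : M) : ℕ → M
  | 0 => 1
  | k+1 => powM x k * x

def listProd : List M → M
  | [] => 1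
  | a :: l => a * listProd l

def listSum : List M → M
  | [] => 0
  | a :: l => a + listSum l

/-- the sequence-decoding relation -/
def Dec (w i x : M) : Prop :=
  ∃ K P W p e, w = pr (pr K P) W ∧ p = pr i x ∧ le 1 p ∧ le p P ∧ W = (p * K + 1) * e

namespace PAx
variable (h : PAx M)
include h

theorem lt_add_of_pos (a : M) {b : M} (hb : 0 < b) : a < a + b := by
  have := h.addLt 0 b a hb
  rwa [h.add0' a, h.addC b a] at this

theorem one_le_succ (x : M) : le 1 (x + 1) := h.le_add_left 1 x

theorem one_le_mul {a b : M} (ha : le 1 a) (hb : le 1 b) : le 1 (a * b) := by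
  have := h.mul_le_mul ha hb
  rwa [h.mul1 1] at this

theorem ne_zero_of_one_le {z : M} (hz : le 1 z) : z ≠ 0 := by
  rintro rfl
  rcases hz with hz | hz
  · exact h.not_lt_zero 1 hz
  · have := h.zlto
    rw [hz] at this
    exact h.ltI 0 this

theorem one_le_pr (x y : M) : le 1 (pr x y) := by
  unfold pr
  exact h.le_trans (h.one_le_succ x) (h.le_add_left _ _)

theorem pr_lt_pr {x y x' y' : M} (hs : x + y < x' + y') : pr x y < pr x' y' := by
  letI := h.toCS
  set s := x + y
  set s' := x' + y'
  have h1 : le (pr x y) (s * s + (s + 1)) := by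
    unfold pr
    apply h.add_le_add_left
    apply h.add_le_add_right
    exact h.le_add_right x y
  have h2 : le (s * s + (s + 1) + (s + 1)) (pr x' y') := by
    have hss : le (s + 1) s' := by
      rcases h.disc _ _ hs with h3 | h3
      · exact Or.inr h3
      · exact Or.inl h3
    have hmul : le ((s+1) * (s+1)) (s' * s') := h.mul_le_mul hss hss
    have heq : s * s + (s + 1) + (s + 1) = (s+1) * (s+1) + 1 := by ring
    rw [heq]
    have h4 : le ((s+1)*(s+1) + 1) (s' * s' + 1) := h.add_le_add_right 1 hmul
    refine h.le_trans h4 ?_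
    unfold pr
    exact h.add_le_add_left _ (h.one_le_succ x')
  have h3 : s * s + (s + 1) < s * s + (s + 1) + (s + 1) := by
    apply h.lt_add_of_pos
    exact h.lt_of_lt_of_le h.zlto (h.one_le_succ s)
  exact h.lt_of_le_of_lt h1 (h.lt_of_lt_of_le h3 h2)

theorem pr_inj {x y x' y' : M} (he : pr x y = pr x' y') : x = x' ∧ y = y' := by
  letI := h.toCS
  have hs : x + y = x' + y' := by
    rcases h.tri (x + y) (x' + y') with h1 | h1 | h1
    · exact absurd he (h.ne_of_lt (h.pr_lt_pr h1))
    · exact h1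
    · exact absurd he.symm (h.ne_of_lt (h.pr_lt_pr h1))
  have hx : x = x' := by
    unfold pr at he
    rw [hs] at he
    have := h.addCan' he
    exact h.addCan _ _ _ this
  subst hx
  exact ⟨rfl, h.addCan' hs⟩

theorem mem_le_listSum {a : M} {l : List M} (ha : a ∈ l) : le a (listSum l) := by
  induction l with
  | nil => simp at ha
  | cons b l ih =>
    rcases List.mem_cons.mp ha with rfl | ha
    · exact h.le_add_right _ _
    · exact h.le_trans (ih ha) (h.le_add_left _ _)

theorem listProd_dvd {a : M} {l : List M} (ha : a ∈ l) : ∃ e, listProd l = a * e := by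
  letI := h.toCS
  induction l with
  | nil => simp at ha
  | cons b l ih =>
    rcases List.mem_cons.mp ha with rfl | ha
    · exact ⟨listProd l, rfl⟩
    · obtain ⟨e, hee⟩ := ih ha
      exact ⟨b * e, by show b * listProd l = _; rw [hee]; ring⟩

/-- The main "no junk divisors" lemma. -/
theorem junk_core (L : List M) (p K P : M)
    (hp1 : le 1 p) (hpP : le p P)
    (hL : ∀ n ∈ L, le 1 n ∧ le n P)
    (hne : ∀ n ∈ L, p ≠ n)
    (hK : powM P L.length < K)
    (hdvd : ∃ e, listProd (L.map (fun n => n * K + 1)) = (p * K + 1) * e) : False := by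
  letI := h.toCS
  set d := p * K + 1 with hd
  -- main induction
  have claim : ∀ L' : List M, (∀ n ∈ L', le 1 n ∧ le n P) → (∀ n ∈ L', p ≠ n) →
      ∃ z, le 1 z ∧ le z (powM P L'.length) ∧
        (Cong d (powM p L'.length * listProd (L'.map (fun n => n * K + 1))) z ∨
         Cong d (powM p L'.length * listProd (L'.map (fun n => n * K + 1)) + z) 0) := by
    intro L'
    induction L' with
    | nil =>
      intro _ _
      refine ⟨1, h.le_refl 1, h.le_refl 1, Or.inl ?_⟩
      apply PAx.cong_of_eq
      show (1 : M) * listProd [] = 1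
      show (1 : M) * 1 = 1
      ring
    | cons n L' ih =>
      intro hL' hne'
      obtain ⟨z', hz1, hz2, hcase⟩ := ih (fun x hx => hL' x (List.mem_cons_of_mem n hx))
        (fun x hx => hne' x (List.mem_cons_of_mem n hx))
      set A' := powM p L'.length * listProd (L'.map (fun n => n * K + 1)) with hA'
      set t := n * K + 1 with ht
      have hAnew : powM p (n :: L').length * listProd ((n :: L').map (fun n => n * K + 1))
          = (p * t) * A' := by
        show powM p (L'.length + 1) * (t * listProd (L'.map (fun n => n * K + 1))) = _
        show powM p L'.length * p * (t * listProd (L'.map (fun n => n * K + 1))) = _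
        rw [hA']; ring
      have keyEq : p * t + n = n * d + p := by rw [ht, hd]; ring
      -- get δ and the sign of p*t mod d
      have hpn : p ≠ n := hne' n (List.mem_cons_self)
      obtain ⟨hn1, hnP⟩ := hL' n (List.mem_cons_self)
      have hδ : ∃ δ, le 1 δ ∧ le δ P ∧ (Cong d (p * t) δ ∨ Cong d (p * t + δ) 0) := by
        rcases h.tri p n with h1 | h1 | h1
        · -- p < n : negative sign
          obtain ⟨δ, hδe⟩ := h.subE _ _ h1
          have hδ1 : le 1 δ := by
            apply h.one_le_of_pos
            rcases h.posOr δ with rfl | hpos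
            · exfalso; rw [h.add0] at hδe; exact hpn hδe
            · exact hpos
          have hδP : le δ P := h.le_trans (h.le_trans (h.le_add_left δ p) (h.le_of_eq hδe)) hnP
          refine ⟨δ, hδ1, hδP, Or.inr ?_⟩
          refine ⟨0, n, ?_⟩
          have : p * t + δ = n * d := by
            apply h.addCan _ _ p
            calc p * t + δ + p = (p * t + n) := by rw [← hδe]; ring
              _ = n * d + p := keyEq
          rw [this]; ring
        · exact absurd h1 hpn
        · -- n < p : positive sign
          obtain ⟨δ, hδe⟩ := h.subE _ _ h1
          have hδ1 : le 1 δ := by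
            apply h.one_le_of_pos
            rcases h.posOr δ with rfl | hpos
            · exfalso; rw [h.add0] at hδe; exact hpn hδe.symm
            · exact hpos
          have hδP : le δ P := h.le_trans (h.le_trans (h.le_add_left δ n) (h.le_of_eq hδe)) hpP
          refine ⟨δ, hδ1, hδP, Or.inl ?_⟩
          refine ⟨0, n, ?_⟩
          have : p * t = δ + n * d := by
            apply h.addCan _ _ n
            calc p * t + n = n * d + p := keyEq
              _ = n * d + (n + δ) := by rw [hδe]
              _ = δ + n * d + n := by ring
          rw [this]; ring
      obtain ⟨δ, hδ1, hδP, hδcase⟩ := hδ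
      refine ⟨z' * δ, h.one_le_mul hz1 hδ1, ?_, ?_⟩
      · show le (z' * δ) (powM P L'.length * P)
        exact h.mul_le_mul hz2 hδP
      · rw [hAnew]
        rcases hcase with hA | hA <;> rcases hδcase with hδc | hδc
        · -- A' ≡ z', pt ≡ δ
          left
          have := h.cong_mul hδc hA
          refine h.cong_trans (PAx.cong_of_eq (by ring)) (h.cong_trans this (PAx.cong_of_eq (by ring)))
        · -- A' ≡ z', pt + δ ≡ 0
          right
          have step1 : Cong d (p * t * A' + z' * δ) (p * t * z' + z' * δ) :=
            h.cong_add (h.cong_mul (PAx.cong_refl d (p*t)) hA) (PAx.cong_refl d (z' * δ))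
          have step2 : Cong d (p * t * z' + z' * δ) ((p * t + δ) * z') := PAx.cong_of_eq (by ring)
          have step3 : Cong d ((p * t + δ) * z') 0 := by
            have := h.cong_mul_right z' hδc
            rwa [h.mul0'] at this
          exact h.cong_trans (h.cong_trans step1 step2) step3
        · -- A' + z' ≡ 0, pt ≡ δ
          right
          have step1 : Cong d (p * t * A' + z' * δ) (p * t * A' + z' * (p * t)) :=
            h.cong_add (PAx.cong_refl d _) (h.cong_mul (PAx.cong_refl d z') (PAx.cong_symm hδc))
          have step2 : Cong d (p * t * A' + z' * (p * t)) ((A' + z') * (p * t)) :=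
            PAx.cong_of_eq (by ring)
          have step3 : Cong d ((A' + z') * (p * t)) 0 := by
            have := h.cong_mul_right (p * t) hA
            rwa [h.mul0'] at this
          exact h.cong_trans (h.cong_trans step1 step2) step3
        · -- A' + z' ≡ 0, pt + δ ≡ 0 : positive
          left
          have hBIG : Cong d ((A' + z') * (p * t + δ)) 0 := by
            have := h.cong_mul hA hδc
            rwa [h.mul0'] at this
          have hS1 : Cong d ((A' + z') * δ) 0 := by
            have := h.cong_mul_right δ hA
            rwa [h.mul0'] at this
          have hS2 : Cong d ((p * t + δ) * z') 0 := by
            have := h.cong_mul_right z' hδc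
            rwa [h.mul0'] at this
          -- BIG + z'δ ≡ A'pt + S1 + S2
          have e1 : Cong d ((A' + z') * (p * t + δ) + z' * δ)
              (p * t * A' + ((A' + z') * δ + (p * t + δ) * z')) := PAx.cong_of_eq (by ring)
          have e2 : Cong d (p * t * A' + ((A' + z') * δ + (p * t + δ) * z'))
              (p * t * A' + (0 + 0)) :=
            h.cong_add (PAx.cong_refl d _) (h.cong_add hS1 hS2)
          have e3 : Cong d ((A' + z') * (p * t + δ) + z' * δ) (p * t * A') :=
            h.cong_trans (h.cong_trans e1 e2) (PAx.cong_of_eq (by ring))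
          have e4 : Cong d ((A' + z') * (p * t + δ) + z' * δ) (0 + z' * δ) :=
            h.cong_add hBIG (PAx.cong_refl d _)
          have e5 : Cong d (p * t * A') (z' * δ) :=
            h.cong_trans (PAx.cong_symm e3) (h.cong_trans e4 (PAx.cong_of_eq (by rw [h.add0'])))
          exact e5
  obtain ⟨z, hz1, hz2, hcase⟩ := claim L hL hne
  -- conclude
  obtain ⟨e, he⟩ := hdvd
  have hW0 : Cong d (listProd (L.map (fun n => n * K + 1))) 0 :=
    (h.cong_zero_iff_dvd).mpr ⟨e, he⟩
  have hA0 : Cong d (powM p L.length * listProd (L.map (fun n => n * K + 1))) 0 := by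
    have := h.cong_mul (PAx.cong_refl d (powM p L.length)) hW0
    rwa [h.mul0] at this
  have hz0 : Cong d z 0 := by
    rcases hcase with hc | hc
    · exact h.cong_trans (PAx.cong_symm hc) hA0
    · exact h.cong_cancel_zero hc hA0
  have hdz : le d z := h.dvd_le ((h.cong_zero_iff_dvd).mp hz0) (h.ne_zero_of_one_le hz1)
  -- but z ≤ P^m < K ≤ p*K < d
  have hKpK : le K (p * K) := by
    have := h.mul_le_mul_right K hp1
    rwa [h.mul1'] at this
  have : d < d := by
    have h1 : le d (powM P L.length) := h.le_trans hdz hz2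
    have h2 : d < K := h.lt_of_le_of_lt h1 hK
    have h3 : d < p * K := h.lt_of_lt_of_le h2 hKpK
    exact h.lt_of_lt_of_le h3 (h.le_add_right _ _)
  exact h.ltI _ this

/-- Existence of codes for standard-length sequences, with exact decoding. -/
theorem code_exists (m : ℕ) (a : Fin m → M) :
    ∃ w, (∀ j : Fin m, Dec w (std M j.1) (a j)) ∧
      (∀ pos x, Dec w pos x → ∃ j : Fin m, pos = std M j.1 ∧ x = a j) := by
  letI := h.toCS
  set nv : Fin m → M := fun j => pr (std M j.1) (a j) with hnv
  set L : List M := List.ofFn nv with hL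
  set P : M := listSum L with hP
  set K : M := powM P m + 1 with hK
  set W : M := listProd (L.map (fun n => n * K + 1)) with hW
  refine ⟨pr (pr K P) W, ?_, ?_⟩
  · intro j
    refine ⟨K, P, W, nv j, ?_⟩
    have hmem : nv j ∈ L := by rw [hL]; exact List.mem_ofFn.mpr ⟨j, rfl⟩ -- mem of ofFn
    obtain ⟨e, hee⟩ := h.listProd_dvd (List.mem_map_of_mem (f := fun n => n * K + 1) hmem)
    exact ⟨e, rfl, rfl, h.one_le_pr _ _, h.mem_le_listSum hmem, hee⟩
  · intro pos x hdec
    obtain ⟨K', P', W', p, e, hw, hp, hp1, hpP, hWe⟩ := hdec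
    obtain ⟨hKP', hWW'⟩ := h.pr_inj hw
    obtain ⟨hKK', hPP'⟩ := h.pr_inj hKP'
    subst hKK'; subst hPP'; subst hWW'
    by_contra hcon
    push_neg at hcon
    refine h.junk_core L p K P hp1 hpP ?_ ?_ ?_ ⟨e, hWe⟩
    · intro n hn
      obtain ⟨j, rfl⟩ := List.mem_ofFn.mp hn
      exact ⟨h.one_le_pr _ _, h.mem_le_listSum hn⟩
    · intro n hn hpn
      obtain ⟨j, rfl⟩ := List.mem_ofFn.mp hn
      rw [hp] at hpn
      obtain ⟨hpos, hx⟩ := h.pr_inj hpn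
      exact hcon j hpos hx
    · rw [hL, List.length_ofFn]
      exact h.lt_add_one _
end PAx
end SCPAux
namespace SCPAux

/-- A definable set bundled with its definability proof. -/
structure Df (M : Type*) [ArithData M] (α : Type) where
  s : Set (α → M)
  df : Set.Definable (Set.univ : Set M) Larith s

namespace Df
variable {M : Type*} [ArithData M] {α β : Type}

def congr (a : Df M α) (t : Set (α → M)) (ht : a.s = t) : Df M α := ⟨t, ht ▸ a.df⟩
def dand (a b : Df M α) : Df M α := ⟨{f | f ∈ a.s ∧ f ∈ b.s}, a.df.inter b.df⟩
def dor (a b : Df M α) : Df M α := ⟨{f | f ∈ a.s ∨ f ∈ b.s}, a.df.union b.df⟩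
def dnot (a : Df M α) : Df M α := ⟨{f | f ∉ a.s}, a.df.compl⟩
def dimp (a b : Df M α) : Df M α :=
  ((a.dnot).dor b).congr {f | f ∈ a.s → f ∈ b.s} (by
    ext f
    simp only [dor, dnot, Set.mem_setOf_eq]
    exact (imp_iff_not_or).symm)
def reind (ρ : α → β) (a : Df M α) : Df M β := ⟨{g | g ∘ ρ ∈ a.s}, a.df.preimage_comp ρ⟩

def dex [Finite α] [Finite β] (a : Df M (α ⊕ β)) : Df M α :=
  ⟨{f | ∃ g : β → M, Sum.elim f g ∈ a.s}, by
    have hd := a.df.image_comp (Sum.inl : α → α ⊕ β)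
    have : ((fun g : α ⊕ β → M => g ∘ Sum.inl) '' a.s) = {f | ∃ g : β → M, Sum.elim f g ∈ a.s} := by
      ext f
      constructor
      · rintro ⟨gg, hgg, rfl⟩
        refine ⟨gg ∘ Sum.inr, ?_⟩
        have : (Sum.elim (gg ∘ Sum.inl) (gg ∘ Sum.inr)) = gg := by
          funext x; cases x <;> rfl
        rwa [this]
      · rintro ⟨g, hg⟩
        exact ⟨Sum.elim f g, hg, by funext x; rfl⟩
    rwa [this] at hd⟩

def dall [Finite α] [Finite β] (a : Df M (α ⊕ β)) : Df M α :=
  (((a.dnot).dex).dnot).congr {f | ∀ g : β → M, Sum.elim f g ∈ a.s} (by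
    ext f
    simp only [dnot, dex, Set.mem_setOf_eq, not_exists, not_not])

/-! atoms -/

private theorem atom_def (φ : Larith.Formula α) (t : Set (α → M))
    (ht : ∀ f, φ.Realize f ↔ f ∈ t) :
    Set.Definable (Set.univ : Set M) Larith t := by
  apply Set.Definable.mono (A := (∅ : Set M))
  · rw [Set.empty_definable_iff]
    refine ⟨φ, ?_⟩
    ext f
    exact (ht f).symm
  · exact Set.empty_subset _

def aAdd (i j l : α) : Df M α :=
  ⟨{f | f i + f j = f l}, atom_def (Term.equal (Term.func (show Larith.Functions 2 from (0 : Fin 2)) ![Term.var i, Term.var j]) (Term.var l)) _ (by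
    intro f
    simp [Formula.realize_equal, Formula.realize_rel, Term.realize_func, arithStructure]
    exact Iff.rfl)⟩

def aMul (i j l : α) : Df M α :=
  ⟨{f | f i * f j = f l}, atom_def (Term.equal (Term.func (show Larith.Functions 2 from (1 : Fin 2)) ![Term.var i, Term.var j]) (Term.var l)) _ (by
    intro f
    simp [Formula.realize_equal, Formula.realize_rel, Term.realize_func, arithStructure]
    exact Iff.rfl)⟩

def aLt (i j : α) : Df M α :=
  ⟨{f | f i < f j}, atom_def (Relations.formula (show Larith.Relations 2 from Unit.unit) ![Term.var i, Term.var j]) _ (by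
    intro f
    simp [Formula.realize_equal, Formula.realize_rel, Term.realize_func, arithStructure]
    exact Iff.rfl)⟩

def aEq (i j : α) : Df M α :=
  ⟨{f | f i = f j}, atom_def (Term.equal (Term.var i) (Term.var j)) _ (by
    intro f
    simp [Formula.realize_equal, Formula.realize_rel, Term.realize_func, arithStructure])⟩

def aZero (i : α) : Df M α :=
  ⟨{f | f i = 0}, atom_def (Term.equal (Term.var i) (Term.func (show Larith.Functions 0 from (0 : Fin 2)) ![])) _ (by
    intro f
    simp [Formula.realize_equal, Formula.realize_rel, Term.realize_func, arithStructure]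
    exact Iff.rfl)⟩

def aSucc (i j : α) : Df M α :=
  ⟨{f | f i = f j + 1}, atom_def (Term.equal (Term.var i) (Term.func (show Larith.Functions 2 from (0 : Fin 2)) ![Term.var j, Term.func (show Larith.Functions 0 from (1 : Fin 2)) ![] ])) _ (by
    intro f
    simp [Formula.realize_equal, Formula.realize_rel, Term.realize_func, arithStructure]
    exact Iff.rfl)⟩

def aOne (i : α) : Df M α :=
  ⟨{f | f i = 1}, atom_def (Term.equal (Term.var i)
      (Term.func (show Larith.Functions 0 from (1 : Fin 2)) ![])) _ (by
    intro f
    simp [Formula.realize_equal, Term.realize_func, arithStructure]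
    exact Iff.rfl)⟩

def aLe (i j : α) : Df M α := (aLt i j).dor (aEq i j)

/-! simp lemmas for membership -/

@[simp] theorem mem_dand {a b : Df M α} {f : α → M} : f ∈ (a.dand b).s ↔ f ∈ a.s ∧ f ∈ b.s := Iff.rfl
@[simp] theorem mem_dor {a b : Df M α} {f : α → M} : f ∈ (a.dor b).s ↔ f ∈ a.s ∨ f ∈ b.s := Iff.rfl
@[simp] theorem mem_dnot {a : Df M α} {f : α → M} : f ∈ (a.dnot).s ↔ f ∉ a.s := Iff.rfl
@[simp] theorem mem_dimp {a b : Df M α} {f : α → M} : f ∈ (a.dimp b).s ↔ (f ∈ a.s → f ∈ b.s) := Iff.rfl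
@[simp] theorem mem_reind {ρ : α → β} {a : Df M α} {g : β → M} :
    g ∈ (a.reind ρ).s ↔ g ∘ ρ ∈ a.s := Iff.rfl
@[simp] theorem mem_dex [Finite α] [Finite β] {a : Df M (α ⊕ β)} {f : α → M} :
    f ∈ (a.dex).s ↔ ∃ g : β → M, Sum.elim f g ∈ a.s := Iff.rfl
@[simp] theorem mem_dall [Finite α] [Finite β] {a : Df M (α ⊕ β)} {f : α → M} :
    f ∈ (a.dall).s ↔ ∀ g : β → M, Sum.elim f g ∈ a.s := Iff.rfl
@[simp] theorem mem_aAdd {i j l : α} {f : α → M} : f ∈ (aAdd (M := M) i j l).s ↔ f i + f j = f l := Iff.rfl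
@[simp] theorem mem_aMul {i j l : α} {f : α → M} : f ∈ (aMul (M := M) i j l).s ↔ f i * f j = f l := Iff.rfl
@[simp] theorem mem_aLt {i j : α} {f : α → M} : f ∈ (aLt (M := M) i j).s ↔ f i < f j := Iff.rfl
@[simp] theorem mem_aEq {i j : α} {f : α → M} : f ∈ (aEq (M := M) i j).s ↔ f i = f j := Iff.rfl
@[simp] theorem mem_aZero {i : α} {f : α → M} : f ∈ (aZero (M := M) i).s ↔ f i = 0 := Iff.rfl
@[simp] theorem mem_aOne {i : α} {f : α → M} : f ∈ (aOne (M := M) i).s ↔ f i = 1 := Iff.rfl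
@[simp] theorem mem_aSucc {i j : α} {f : α → M} : f ∈ (aSucc (M := M) i j).s ↔ f i = f j + 1 := Iff.rfl
@[simp] theorem mem_aLe {i j : α} {f : α → M} : f ∈ (aLe (M := M) i j).s ↔ le (f i) (f j) := Iff.rfl

/-! big conjunctions -/

def dtop : Df M α := ⟨Set.univ, Set.definable_univ⟩

def listAnd : List (Df M α) → Df M α
  | [] => dtop
  | a :: l => a.dand (listAnd l)

theorem mem_listAnd {L : List (Df M α)} {f : α → M} :
    f ∈ (listAnd L).s ↔ ∀ a ∈ L, f ∈ a.s := by
  induction L with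
  | nil => simp [listAnd, dtop]
  | cons a l ih =>
    simp only [listAnd, mem_dand, ih, List.mem_cons]
    constructor
    · rintro ⟨h1, h2⟩ b (rfl | hb)
      · exact h1
      · exact h2 b hb
    · intro hb
      exact ⟨hb a (Or.inl rfl), fun b hb' => hb b (Or.inr hb')⟩

/-! numerals -/

def aNum : ℕ → {α : Type} → [inst : Finite α] → α → Df M α
  | 0, _, _, i => aZero i
  | (q+1), α, _, i =>
    Df.dex (β := Unit) ((aNum q (Sum.inr () : α ⊕ Unit)).dand (aSucc (Sum.inl i) (Sum.inr ())))

theorem mem_aNum : ∀ (q : ℕ) {α : Type} [Finite α] (i : α) (f : α → M),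
    f ∈ (aNum (M := M) q i).s ↔ f i = std M q
  | 0, _, _, _, _ => Iff.rfl
  | (q+1), α, _, i, f => by
    simp only [aNum, mem_dex, mem_dand, mem_aSucc]
    constructor
    · rintro ⟨g, h1, h2⟩
      have h1' := (mem_aNum q (Sum.inr () : α ⊕ Unit) (Sum.elim f g)).mp h1
      simp only [Sum.elim_inr, Sum.elim_inl] at h1' h2
      rw [h2, h1']
      rfl
    · intro hf
      refine ⟨fun _ => std M q, ?_, ?_⟩
      · refine (mem_aNum q _ _).mpr ?_
        simp
      · simp only [Sum.elim_inl, Sum.elim_inr]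
        rw [hf]
        rfl

/-- fibers of definable sets are definable (substituting a constant) -/
def dfiber [Finite α] (a : Df M (α ⊕ Unit)) (c : M) : Df M α :=
  ⟨{f | Sum.elim f (fun _ => c) ∈ a.s}, by
    obtain ⟨φ, hφ⟩ := a.df
    set tf : α ⊕ Unit → Larith[[(Set.univ : Set M)]].Term α :=
      Sum.elim (fun i => Term.var i)
        (fun _ => ((Larith.con (⟨c, Set.mem_univ c⟩ : (Set.univ : Set M))).term)) with htf
    refine ⟨φ.subst tf, ?_⟩
    ext f
    have key : (fun a => Term.realize f (tf a)) = Sum.elim f (fun _ => c) := by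
      funext a
      cases a with
      | inl i => simp [htf]
      | inr u => simp [htf, Term.realize_con]
    simp only [Set.mem_setOf_eq, Formula.Realize, BoundedFormula.realize_subst, key]
    rw [hφ]
    rfl⟩

@[simp] theorem mem_dfiber [Finite α] {a : Df M (α ⊕ Unit)} {c : M} {f : α → M} :
    f ∈ (a.dfiber c).s ↔ Sum.elim f (fun _ => c) ∈ a.s := Iff.rfl

end Df
end SCPAux
namespace SCPAux
variable {M : Type*} [ArithData M] {α : Type}

@[simp] theorem forall_mem_nil_iff {γ : Type*} {p : γ → Prop} :
    (∀ x ∈ ([] : List γ), p x) ↔ True :=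
  iff_true_intro (fun x a => absurd a List.not_mem_nil)

/-- conjunction over `Fin k` -/
def andN {k : ℕ} (F : Fin k → Df M α) : Df M α := Df.listAnd (List.ofFn F)

theorem mem_andN {k : ℕ} {F : Fin k → Df M α} {f : α → M} :
    f ∈ (andN F).s ↔ ∀ t, f ∈ (F t).s := by
  simp only [andN, Df.mem_listAnd]
  constructor
  · intro hf t
    exact hf (F t) (List.mem_ofFn.mpr ⟨t, rfl⟩)
  · intro hf a ha
    obtain ⟨t, rfl⟩ := List.mem_ofFn.mp ha
    exact hf t

/-- pr graph -/
def dPr [Finite α] (i j l : α) : Df M α := Df.dex (β := Fin 3) (Df.listAnd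
  [Df.aAdd (.inl i) (.inl j) (.inr 0), Df.aMul (.inr 0) (.inr 0) (.inr 1),
   Df.aSucc (.inr 2) (.inl i), Df.aAdd (.inr 1) (.inr 2) (.inl l)])

theorem mem_dPr [Finite α] {i j l : α} {f : α → M} :
    f ∈ (dPr (M := M) i j l).s ↔ pr (f i) (f j) = f l := by
  simp only [dPr, Df.mem_dex, Df.mem_listAnd, List.forall_mem_cons, forall_mem_nil_iff,
    Df.mem_aAdd, Df.mem_aMul, Df.mem_aSucc, Sum.elim_inl, Sum.elim_inr, and_true]
  constructor
  · rintro ⟨g, h1, h2, h3, h4⟩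
    unfold pr
    rw [h1, h2, ← h3, h4]
  · intro hp
    refine ⟨![f i + f j, (f i + f j) * (f i + f j), f i + 1], rfl, rfl, rfl, ?_⟩
    simpa [pr] using hp

/-- `1 ≤ ·` -/
def dOneLe [Finite α] (i : α) : Df M α := Df.dex (β := Fin 1) (Df.listAnd
  [Df.aOne (.inr 0), Df.aLe (.inr 0) (.inl i)])

theorem mem_dOneLe [Finite α] {i : α} {f : α → M} :
    f ∈ (dOneLe (M := M) i).s ↔ le 1 (f i) := by
  simp only [dOneLe, Df.mem_dex, Df.mem_listAnd, List.forall_mem_cons, forall_mem_nil_iff,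
    Df.mem_aOne, Df.mem_aLe, Sum.elim_inl, Sum.elim_inr, and_true]
  constructor
  · rintro ⟨g, h1, h2⟩
    rwa [h1] at h2
  · intro hf
    exact ⟨![1], rfl, hf⟩

/-- Dec graph -/
def dDec [Finite α] (w pos x : α) : Df M α := Df.dex (β := Fin 8) (Df.listAnd
  [dPr (.inr 0) (.inr 1) (.inr 5),      -- Q = pr K P
   dPr (.inr 5) (.inr 2) (.inl w),      -- w = pr Q W
   dPr (.inl pos) (.inl x) (.inr 3),    -- p = pr pos x
   dOneLe (.inr 3),                     -- 1 ≤ p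
   Df.aLe (.inr 3) (.inr 1),            -- p ≤ P
   Df.aMul (.inr 3) (.inr 0) (.inr 6),  -- d1 = p * K
   Df.aSucc (.inr 7) (.inr 6),          -- d2 = d1 + 1
   Df.aMul (.inr 7) (.inr 4) (.inr 2)]) -- W = d2 * e

theorem mem_dDec [Finite α] {w pos x : α} {f : α → M} :
    f ∈ (dDec (M := M) w pos x).s ↔ Dec (f w) (f pos) (f x) := by
  constructor
  · rintro ⟨g, hg⟩
    simp only [Df.mem_listAnd, List.forall_mem_cons, forall_mem_nil_iff, and_true,
      mem_dPr, mem_dOneLe, Df.mem_aLe, Df.mem_aMul, Df.mem_aSucc,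
      Sum.elim_inl, Sum.elim_inr] at hg
    obtain ⟨h1, h2, h3, h4, h5, h6, h7, h8⟩ := hg
    refine ⟨g 0, g 1, g 2, g 3, g 4, ?_, h3.symm, h4, h5, ?_⟩
    · rw [← h2, ← h1]
    · rw [← h8, h7, h6]
  · rintro ⟨K, P, W, p, e, hw, hp, hp1, hpP, hWe⟩
    refine ⟨![K, P, W, p, e, pr K P, p * K, p * K + 1], ?_⟩
    simp only [Df.mem_listAnd, List.forall_mem_cons, forall_mem_nil_iff, and_true,
      mem_dPr, mem_dOneLe, Df.mem_aLe, Df.mem_aMul, Df.mem_aSucc,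
      Sum.elim_inl, Sum.elim_inr]
    refine ⟨rfl, ?_, ?_, ?_, ?_, ?_, ?_, ?_⟩
    · show pr (pr K P) W = f w
      exact hw.symm
    · show pr (f pos) (f x) = p
      exact hp.symm
    · exact hp1
    · exact hpP
    · rfl
    · rfl
    · exact hWe.symm

section Theta
variable (n : ℕ) (D : Set (Fin n → M)) (hD : Set.Definable (Set.univ : Set M) Larith D)

-- index spaces
-- Γ  = Fin 1 ⊕ Unit           : c, w
-- Γ1 = Γ ⊕ Fin 1              : + i
-- B1 = Fin n ⊕ (Fin 2 ⊕ (Fin n ⊕ Fin n)) : b-block, (n̄, ū), t̄'s, pos's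
-- Γ2 = Γ ⊕ Fin 4              : + i j x y
-- inner2 aux = Fin 7          : n̄ ūi ūj t̄ s̄ posit posjs

def theta1inner : Df M ((( Fin 1 ⊕ Unit) ⊕ Fin 1) ⊕ (Fin n ⊕ (Fin 2 ⊕ (Fin n ⊕ Fin n)))) :=
  (Df.reind (fun t => (.inr (.inl t))) ⟨D, hD⟩).dand <|
  (andN (fun t : Fin n => andN (fun s : Fin n =>
      if t = s then Df.dtop else (Df.aEq (.inr (.inl t)) (.inr (.inl s))).dnot))).dand <|
  (andN (fun t : Fin n => Df.aLt (.inl (.inl (.inl 0))) (.inr (.inl t)))).dand <|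
  (Df.aNum n (.inr (.inr (.inl 0)))).dand <|
  (Df.aMul (.inl (.inr 0)) (.inr (.inr (.inl 0))) (.inr (.inr (.inl 1)))).dand <|
  (andN (fun t : Fin n => Df.aNum t.1 (.inr (.inr (.inr (.inl t)))))).dand <|
  (andN (fun t : Fin n => Df.aAdd (.inr (.inr (.inl 1))) (.inr (.inr (.inr (.inl t))))
      (.inr (.inr (.inr (.inr t)))))).dand <|
  (andN (fun t : Fin n => dDec (.inl (.inl (.inr ()))) (.inr (.inr (.inr (.inr t))))
      (.inr (.inl t))))

def theta1 : Df M (Fin 1 ⊕ Unit) :=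
  Df.dall (β := Fin 1) <|
    (Df.aLt (.inr 0) (.inl (.inl 0))).dimp <|
      Df.dex (β := (Fin n ⊕ (Fin 2 ⊕ (Fin n ⊕ Fin n)))) (theta1inner n D hD)

def theta2 : Df M (Fin 1 ⊕ Unit) :=
  Df.dall (β := Fin 4) <|
    (((Df.aLt (α := (Fin 1 ⊕ Unit) ⊕ Fin 4) (.inr 0) (.inl (.inl 0))).dand
      ((Df.aLt (α := (Fin 1 ⊕ Unit) ⊕ Fin 4) (.inr 1) (.inl (.inl 0))).dand
        ((Df.aEq (α := (Fin 1 ⊕ Unit) ⊕ Fin 4) (.inr 0) (.inr 1)).dnot)))).dimp <|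
    andN (fun t : Fin n => andN (fun s : Fin n =>
      Df.dex (β := Fin 7) <| Df.listAnd
        [Df.aNum (α := ((Fin 1 ⊕ Unit) ⊕ Fin 4) ⊕ Fin 7) n (.inr 0),
         Df.aMul (.inl (.inr 0)) (.inr 0) (.inr 1),
         Df.aMul (.inl (.inr 1)) (.inr 0) (.inr 2),
         Df.aNum t.1 (.inr 3),
         Df.aNum s.1 (.inr 4),
         Df.aAdd (.inr 1) (.inr 3) (.inr 5),
         Df.aAdd (.inr 2) (.inr 4) (.inr 6),
         ((dDec (.inl (.inl (.inr ()))) (.inr 5) (.inl (.inr 2))).dand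
          (dDec (.inl (.inl (.inr ()))) (.inr 6) (.inl (.inr 3)))).dimp
            ((Df.aEq (.inl (.inr 2)) (.inl (.inr 3))).dnot)]))

def thetaSet : Df M (Fin 1) :=
  Df.dex (β := Unit) ((theta1 n D hD).dand (theta2 (M := M) n))

/-- semantic content of the θ formula -/
def ThetaSem (c : M) : Prop :=
  ∃ w : M,
    (∀ i : M, i < c → ∃ b : Fin n → M, b ∈ D ∧
        (∀ t s : Fin n, t ≠ s → b t ≠ b s) ∧ (∀ t, c < b t) ∧
        (∀ t : Fin n, Dec w (i * std M n + std M t.1) (b t))) ∧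
    (∀ i j x y : M, i < c → j < c → i ≠ j →
      ∀ t s : Fin n, Dec w (i * std M n + std M t.1) x →
        Dec w (j * std M n + std M s.1) y → x ≠ y)

theorem mem_thetaSet {f : Fin 1 → M} :
    f ∈ (thetaSet n D hD).s ↔ ThetaSem n D (f 0) := by
  constructor
  · rintro ⟨gw, hg1, hg2⟩
    refine ⟨gw (), ?_, ?_⟩
    · -- θ1 extraction
      intro i hi
      have := hg1 (fun _ => i)
      simp only [Df.mem_dimp, Df.mem_aLt, Sum.elim_inr, Sum.elim_inl] at this
      obtain ⟨gb, hgb⟩ := this hi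
      simp only [theta1inner, Df.mem_dand, Df.mem_reind, mem_andN, Df.mem_aLt, Df.mem_aNum,
        Df.mem_aMul, Df.mem_aAdd, mem_dDec, Sum.elim_inr, Sum.elim_inl, Df.mem_aEq,
        Df.mem_dnot] at hgb
      obtain ⟨hbD, hbinj, hbgt, hnbar, hubar, htbar, hposd, hdec⟩ := hgb
      refine ⟨fun t => gb (.inl t), hbD, ?_, hbgt, ?_⟩
      · intro t s hts
        have h2 := hbinj t s
        rw [if_neg hts] at h2
        simpa using h2
      · intro t
        have h2 := hdec t
        have h' : gb (.inr (.inr (.inr t))) = i * std M n + std M t.1 := by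
          rw [← hposd t, ← hubar, hnbar, htbar t]
        rwa [h'] at h2
    · -- θ2 extraction
      intro i j x y hi hj hij t s hdx hdy
      have := hg2 ![i, j, x, y]
      simp only [Df.mem_dimp, Df.mem_dand, Df.mem_aLt, Df.mem_aEq, Df.mem_dnot,
        Sum.elim_inr, Sum.elim_inl] at this
      have h2 := this ⟨hi, hj, by simpa using hij⟩
      have h2 := (mem_andN.mp h2) t
      have h2 := (mem_andN.mp h2) s
      obtain ⟨ga, hga⟩ := h2
      simp only [Df.mem_listAnd, List.forall_mem_cons, forall_mem_nil_iff, and_true,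
        Df.mem_aNum, Df.mem_aMul, Df.mem_aAdd, Df.mem_dimp, Df.mem_dand, mem_dDec,
        Df.mem_aEq, Df.mem_dnot, Sum.elim_inr, Sum.elim_inl] at hga
      obtain ⟨a1, a2, a3, a4, a5, a6, a7, a8⟩ := hga
      apply a8
      have e0 : (![i, j, x, y] 0 : M) = i := rfl
      have e1 : (![i, j, x, y] 1 : M) = j := rfl
      constructor
      · have e : (ga 5 : M) = i * std M n + std M t.1 := by rw [← a6, ← a2, a1, a4, e0]
        rw [e]; exact hdx
      · have e : (ga 6 : M) = j * std M n + std M s.1 := by rw [← a7, ← a3, a1, a5, e1]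
        rw [e]; exact hdy
  · rintro ⟨w, hth1, hth2⟩
    refine ⟨fun _ => w, ?_, ?_⟩
    · -- θ1 truth
      intro gi
      simp only [Df.mem_dimp, Df.mem_aLt, Sum.elim_inr, Sum.elim_inl]
      intro hi
      obtain ⟨b, hbD, hbinj, hbgt, hdec⟩ := hth1 (gi 0) hi
      refine ⟨Sum.elim b (Sum.elim ![std M n, gi 0 * std M n]
        (Sum.elim (fun t : Fin n => std M t.1)
          (fun t : Fin n => gi 0 * std M n + std M t.1))), ?_⟩
      simp only [theta1inner, Df.mem_dand, Df.mem_reind, mem_andN, Df.mem_aLt, Df.mem_aNum,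
        Df.mem_aMul, Df.mem_aAdd, mem_dDec, Sum.elim_inr, Sum.elim_inl, Df.mem_aEq,
        Df.mem_dnot]
      refine ⟨?_, ?_, ?_, ?_, ?_, ?_, ?_, ?_⟩
      · exact hbD
      · intro t s
        by_cases hts : t = s
        · rw [if_pos hts]; trivial
        · rw [if_neg hts]
          simp only [Df.mem_dnot, Df.mem_aEq, Sum.elim_inr, Sum.elim_inl]
          exact hbinj t s hts
      · intro t
        exact hbgt t
      · first | rfl | trivial
      · first | rfl | trivial
      · intro t
        first | rfl | trivial
      · intro t
        first | rfl | trivial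
      · intro t
        exact hdec t
    · -- θ2 truth
      intro g4
      simp only [Df.mem_dimp, Df.mem_dand, Df.mem_aLt, Df.mem_aEq, Df.mem_dnot,
        Sum.elim_inr, Sum.elim_inl]
      rintro ⟨hi, hj, hij⟩
      refine mem_andN.mpr fun t => mem_andN.mpr fun s => ?_
      refine ⟨![std M n, g4 0 * std M n, g4 1 * std M n, std M t.1, std M s.1,
        g4 0 * std M n + std M t.1, g4 1 * std M n + std M s.1], ?_⟩
      simp only [Df.mem_listAnd, List.forall_mem_cons, forall_mem_nil_iff, and_true,
        Df.mem_aNum, Df.mem_aMul, Df.mem_aAdd, Df.mem_dimp, Df.mem_dand, mem_dDec,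
        Df.mem_aEq, Df.mem_dnot, Sum.elim_inr, Sum.elim_inl]
      refine ⟨rfl, rfl, rfl, rfl, rfl, rfl, rfl, ?_⟩
      rintro ⟨hdx, hdy⟩
      exact hth2 (g4 0) (g4 1) (g4 2) (g4 3) hi hj hij t s hdx hdy
  
end Theta
end SCPAux
namespace SCPAux
variable {M : Type*} [ArithData M]

theorem le_std_decomp (h : PAx M) {x : M} {k : ℕ} (hx : le x (std M k)) :
    ∃ j, j ≤ k ∧ x = std M j := by
  rcases hx with hx | rfl
  · obtain ⟨j, hj, rfl⟩ := h.lt_std hx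
    exact ⟨j, by omega, rfl⟩
  · exact ⟨k, le_rfl, rfl⟩

theorem nonstd_of_gt (h : PAx M) {c y : M} (hc : c ∉ Set.range (std M)) (hy : c < y) :
    y ∉ Set.range (std M) := by
  rintro ⟨k, rfl⟩
  exact hc (h.mem_range_std_of_le (h.le_of_lt hy))

section MainArg
variable {n : ℕ} {D : Set (Fin n → M)} {hD : Set.Definable (Set.univ : Set M) Larith D}

/-- θ holds at every standard point. -/
theorem thetaSem_std (h : PAx M) (B : Set (Fin n → M)) (hBD : B ⊆ D) (hBinf : B.Infinite)
    (hBinj : ∀ b ∈ B, Function.Injective b)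
    (hBdisj : ∀ b ∈ B, ∀ c ∈ B, b ≠ c → ∀ i j, b i ≠ c j)
    (hn : 0 < n) (k : ℕ) : ThetaSem n D (std M k) := by
  classical
  -- tuples of B with a coordinate ≤ std k form a finite set
  set Bbad : Set (Fin n → M) := {b ∈ B | ∃ t, le (b t) (std M k)} with hBbad
  have hfin : Bbad.Finite := by
    set f : (Fin n → M) → M := fun b => if hb : ∃ t, le (b t) (std M k) then b hb.choose else 0
      with hf
    have himg : (f '' Bbad).Finite := by
      apply Set.Finite.subset ((Set.finite_Iic k).image (std M))
      rintro x ⟨b, hb, rfl⟩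
      obtain ⟨hbB, hex⟩ := hb
      rw [hf]
      simp only [dif_pos hex]
      obtain ⟨j, hj, hje⟩ := le_std_decomp h hex.choose_spec
      exact ⟨j, hj, hje.symm⟩
    have hinj : Set.InjOn f Bbad := by
      intro b hb b' hb' hbe
      by_contra hne
      have h1 : f b = b (hb.2).choose := by rw [hf]; simp only [dif_pos hb.2]
      have h2 : f b' = b' (hb'.2).choose := by rw [hf]; simp only [dif_pos hb'.2]
      exact hBdisj b hb.1 b' hb'.1 hne _ _ (by rw [← h1, ← h2, hbe])
    exact Set.Finite.of_finite_image himg hinj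
  have hgood : (B \ Bbad).Infinite := hBinf.diff hfin
  set e := hgood.natEmbedding with he
  set tup : ℕ → (Fin n → M) := fun i => (e i).1 with htup
  have htupB : ∀ i, tup i ∈ B := fun i => (e i).2.1
  have htupgt : ∀ i t, std M k < tup i t := by
    intro i t
    have hnb : ¬ (tup i ∈ B ∧ ∃ t, le (tup i t) (std M k)) := (e i).2.2
    have hno : ¬ le (tup i t) (std M k) := fun hle => hnb ⟨htupB i, ⟨t, hle⟩⟩
    rcases h.tri (std M k) (tup i t) with h1 | h1 | h1
    · exact h1
    · exact absurd (Or.inr h1.symm) hno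
    · exact absurd (Or.inl h1) hno
  have htupne : ∀ i j, i ≠ j → tup i ≠ tup j := by
    intro i j hij hee
    exact hij (e.injective (Subtype.ext hee))
  have hnpos : 0 < n := hn
  -- values to code
  set a : Fin (k * n) → M := fun j => tup (j.1 / n) ⟨j.1 % n, Nat.mod_lt _ hnpos⟩ with ha
  obtain ⟨w, hw1, hw2⟩ := h.code_exists (k * n) a
  -- index bookkeeping
  have hJlt : ∀ (i' : ℕ), i' < k → ∀ t : Fin n, i' * n + t.1 < k * n := by
    intro i' hi' t
    calc i' * n + t.1 < i' * n + n := Nat.add_lt_add_left t.2 _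
      _ = (i' + 1) * n := by ring
      _ ≤ k * n := Nat.mul_le_mul_right _ (by omega)
  have haJ : ∀ (i' : ℕ) (hi' : i' < k) (t : Fin n),
      a ⟨i' * n + t.1, hJlt i' hi' t⟩ = tup i' t := by
    intro i' hi' t
    have hdiv : (i' * n + t.1) / n = i' := by
      rw [Nat.add_comm, Nat.mul_comm i' n, Nat.add_mul_div_left _ _ hnpos,
        Nat.div_eq_of_lt t.2, Nat.zero_add]
    have hmod : (i' * n + t.1) % n = t.1 := by
      rw [Nat.add_comm, Nat.mul_comm i' n, Nat.add_mul_mod_self_left, Nat.mod_eq_of_lt t.2]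
    show tup ((i' * n + t.1) / n) ⟨(i' * n + t.1) % n, _⟩ = tup i' t
    rw [hdiv]
    exact congrArg _ (Fin.ext hmod)
  have hposeq : ∀ (i' : ℕ) (t : Fin n), std M i' * std M n + std M t.1 = std M (i' * n + t.1) := by
    intro i' t
    rw [h.std_add, h.std_mul]
  refine ⟨w, ?_, ?_⟩
  · -- θ1
    intro i hi
    obtain ⟨i', hi', rfl⟩ := h.lt_std hi
    refine ⟨tup i', hBD (htupB i'), ?_, fun t => htupgt i' t, ?_⟩
    · intro t s hts
      exact fun hc => hts (hBinj _ (htupB i') hc)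
    · intro t
      have := hw1 ⟨i' * n + t.1, hJlt i' hi' t⟩
      rw [haJ i' hi' t] at this
      rw [hposeq i' t]
      exact this
  · -- θ2
    intro i j x y hi hj hij t s hdx hdy
    obtain ⟨i', hi', rfl⟩ := h.lt_std hi
    obtain ⟨j', hj', rfl⟩ := h.lt_std hj
    have hij' : i' ≠ j' := fun hc => hij (by rw [hc])
    rw [hposeq i' t] at hdx
    rw [hposeq j' s] at hdy
    obtain ⟨J1, hJ1, hx1⟩ := hw2 _ _ hdx
    obtain ⟨J2, hJ2, hx2⟩ := hw2 _ _ hdy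
    have hJ1' : J1 = ⟨i' * n + t.1, hJlt i' hi' t⟩ := Fin.ext (h.std_inj hJ1.symm)
    have hJ2' : J2 = ⟨j' * n + s.1, hJlt j' hj' s⟩ := Fin.ext (h.std_inj hJ2.symm)
    rw [hJ1', haJ i' hi' t] at hx1
    rw [hJ2', haJ j' hj' s] at hx2
    rw [hx1, hx2]
    exact hBdisj _ (htupB i') _ (htupB j') (htupne i' j' hij') t s

/-- Overspill: θ holds at some nonstandard point. -/
theorem theta_overspill (h : PAx M) (hns : Set.range (std M) ≠ Set.univ)
    (hstd : ∀ k, ThetaSem n D (std M k)) (hD' : Set.Definable (Set.univ : Set M) Larith D) :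
    ∃ c, c ∉ Set.range (std M) ∧ ThetaSem n D c := by
  by_contra hcon
  push_neg at hcon
  have hmem : ∀ x : M, ThetaSem n D x → x ∈ Set.range (std M) := by
    intro x hx
    by_contra hxn
    exact hcon x hxn hx
  have hall := h.ind (thetaSet n D hD').s (thetaSet n D hD').df ?_ ?_
  · apply hns
    apply Set.eq_univ_of_forall
    intro x
    have := hall x
    rw [mem_thetaSet] at this
    exact hmem x this
  · rw [mem_thetaSet]
    exact hstd 0
  · intro x hx
    rw [mem_thetaSet] at hx ⊢
    obtain ⟨k, hk⟩ := hmem x hx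
    rw [← hk]
    have : std M k + 1 = std M (k + 1) := rfl
    rw [this]
    exact hstd (k + 1)

/-- Family extraction at a nonstandard point. -/
theorem family_extract (h : PAx M) {c : M} (hcns : c ∉ Set.range (std M))
    (hTh : ThetaSem n D c) :
    ∃ T : ℕ → (Fin n → M), (∀ m, T m ∈ D) ∧ (∀ m t, c < T m t) ∧
      (∀ m, Function.Injective (T m)) ∧ (∀ m m', m ≠ m' → ∀ t s, T m t ≠ T m' s) := by
  obtain ⟨w, h1, h2⟩ := hTh
  have hlt : ∀ m : ℕ, std M m < c := h.std_lt_of_nonstd hcns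
  set T : ℕ → (Fin n → M) := fun m => (h1 (std M m) (hlt m)).choose with hT
  have hspec : ∀ m, T m ∈ D ∧ (∀ t s : Fin n, t ≠ s → T m t ≠ T m s) ∧
      (∀ t, c < T m t) ∧ (∀ t : Fin n, Dec w (std M m * std M n + std M t.1) (T m t)) :=
    fun m => (h1 (std M m) (hlt m)).choose_spec
  refine ⟨T, fun m => (hspec m).1, fun m t => (hspec m).2.2.1 t, ?_, ?_⟩
  · intro m t s hts
    by_contra hne
    exact (hspec m).2.1 t s hne hts
  · intro m m' hmm t s
    apply h2 (std M m) (std M m') (T m t) (T m' s) (hlt m) (hlt m')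
      (fun hc => hmm (h.std_inj hc)) t s
    · exact (hspec m).2.2.2 t
    · exact (hspec m').2.2.2 s

/-- the cut-off set `D ∩ (c,∞)ⁿ` is definable -/
def dDcut (hD' : Set.Definable (Set.univ : Set M) Larith D) (c : M) : Df M (Fin n) :=
  (((Df.reind (Sum.inl : Fin n → Fin n ⊕ Unit) ⟨D, hD'⟩).dand
    (andN (fun t : Fin n => Df.aLt (.inr ()) (.inl t)))).dfiber c).congr
    {b | b ∈ D ∧ ∀ t, c < b t} (by
      ext b
      simp only [Df.mem_dfiber, Df.mem_dand, Df.mem_reind, mem_andN, Df.mem_aLt,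
        Sum.elim_inr, Sum.elim_inl, Set.mem_setOf_eq]
      constructor
      · rintro ⟨hb1, hb2⟩
        exact ⟨hb1, hb2⟩
      · rintro ⟨hb1, hb2⟩
        exact ⟨hb1, hb2⟩)

end MainArg

/-- The one-directional main lemma. -/
theorem oneDirection (hPA : IsPAModel M) (hns : Set.range (std M) ≠ Set.univ) (X Y : Set M)
    (hXY : X \ Set.range (std M) = Y \ Set.range (std M)) (hX : StrongCPGeneric M X) :
    StrongCPGeneric M Y := by
  have h : PAx M := pax_of_isPAModel hPA
  intro n D hD I hfam
  obtain ⟨B, hBD, hBinf, hBinj, hBdisj⟩ := hfam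
  rcases Nat.eq_zero_or_pos n with rfl | hn
  · obtain ⟨b, hb, b', hb', hne⟩ := hBinf.nontrivial
    exact absurd (funext fun t => t.elim0) hne
  have hstd : ∀ k, ThetaSem n D (std M k) :=
    thetaSem_std h B hBD hBinf hBinj hBdisj hn
  obtain ⟨c, hcns, hTh⟩ := theta_overspill h hns hstd hD
  obtain ⟨T, hTD, hTgt, hTinj, hTdisj⟩ := family_extract h hcns hTh
  have hTne : Function.Injective T := by
    intro m m' hmm
    by_contra hne
    exact hTdisj m m' hne ⟨0, hn⟩ ⟨0, hn⟩ (by rw [hmm])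
  have happ := hX n (dDcut hD c).s (dDcut hD c).df I ⟨Set.range T, ?_, ?_, ?_, ?_⟩
  · obtain ⟨b, hbD, hbI⟩ := happ
    have hbDc : b ∈ {b | b ∈ D ∧ ∀ t, c < b t} := hbD
    refine ⟨b, hbDc.1, fun i => ?_⟩
    have hbns : b i ∉ Set.range (std M) := nonstd_of_gt h hcns (hbDc.2 i)
    rw [← hbI i]
    have hX' : b i ∈ X ↔ b i ∈ X \ Set.range (std M) := by
      simp [hbns]
    have hY' : b i ∈ Y ↔ b i ∈ Y \ Set.range (std M) := by
      simp [hbns]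
    rw [hX', hY', hXY]
  · rintro bb ⟨m, rfl⟩
    exact ⟨hTD m, fun t => hTgt m t⟩
  · exact Set.infinite_range_of_injective hTne
  · rintro bb ⟨m, rfl⟩
    exact hTinj m
  · rintro b1 ⟨m, rfl⟩ b2 ⟨m', rfl⟩ hne i j
    have hmm : m ≠ m' := fun hc => hne (by rw [hc])
    exact hTdisj m m' hmm i j

end SCPAux

/-- In a nonstandard model of PA, if `X` and `Y` agree on all nonstandard elements, then `X`
is strongly CP-generic iff `Y` is. -/
theorem strongCP_of_eq_above_omega (M : Type*) [ArithData M] (hPA : IsPAModel M)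
    (hns : Set.range (std M) ≠ Set.univ) (X Y : Set M)
    (hXY : X \ Set.range (std M) = Y \ Set.range (std M)) :
    StrongCPGeneric M X ↔ StrongCPGeneric M Y := by
  exact ⟨fun hX => SCPAux.oneDirection hPA hns X Y hXY hX,
    fun hY => SCPAux.oneDirection hPA hns Y X hXY.symm hY⟩
end

section
/- If $X \subseteq M$ is strongly CP-generic in a model $\mathcal{M} \models \mathsf{PA}$, then $X$ is CP-generic. -/
open FirstOrder Language Set

open FirstOrder Language Set

set_option linter.unusedSectionVars false

section Toolkit
variable {M : Type*} [ArithData M] {A : Set M} {n : ℕ}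

lemma eq_const (f : Fin 1 → M) : f = fun _ => f 0 :=
  funext fun i => by rw [Subsingleton.elim i 0]

lemma defEq (i j : Fin n) : A.Definable Larith {g : Fin n → M | g i = g j} := by
  refine ⟨Term.equal (Term.var i) (Term.var j), ?_⟩
  ext g
  simp [Formula.realize_equal, Term.realize]

lemma defLT (i j : Fin n) : A.Definable Larith {g : Fin n → M | g i < g j} := by
  refine ⟨Relations.formula₂ (Sum.inl (default : Unit)) (Term.var i) (Term.var j), ?_⟩
  ext g
  simp [Formula.realize_rel₂, Term.realize, Structure.RelMap]
  exact Iff.rfl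

lemma def_pre1 (i : Fin n) (S : Set (Fin 1 → M)) (hS : A.Definable Larith S) :
    A.Definable Larith {g : Fin n → M | (fun _ => g i) ∈ S} :=
  hS.preimage_comp (fun _ : Fin 1 => i)

lemma def_ex2 (E : Set (Fin 2 → M)) (hE : A.Definable Larith E) :
    A.Definable Larith {f : Fin 1 → M | ∃ y : M, ![f 0, y] ∈ E} := by
  have h := hE.image_comp (fun _ : Fin 1 => (0 : Fin 2))
  have heq : ((fun g : Fin 2 → M => g ∘ fun _ => (0 : Fin 2)) '' E)
      = {f : Fin 1 → M | ∃ y : M, ![f 0, y] ∈ E} := by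
    ext f
    constructor
    · rintro ⟨g, hg, rfl⟩
      refine ⟨g 1, ?_⟩
      have : ![((fun g : Fin 2 → M => g ∘ fun _ => (0 : Fin 2)) g) 0, g 1] = g := by
        funext i
        fin_cases i <;> simp
      exact this ▸ hg
    · rintro ⟨y, hy⟩
      exact ⟨![f 0, y], hy, funext fun i => by
        rw [Subsingleton.elim i 0]; simp⟩
  rw [heq] at h; exact h

lemma def_proj (i : Fin n) (D : Set (Fin n → M)) (hD : A.Definable Larith D) :
    A.Definable Larith {f : Fin 1 → M | ∃ g ∈ D, g i = f 0} := by
  have h := hD.image_comp (fun _ : Fin 1 => i)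
  have heq : ((fun g : Fin n → M => g ∘ fun _ => i) '' D)
      = {f : Fin 1 → M | ∃ g ∈ D, g i = f 0} := by
    ext f
    constructor
    · rintro ⟨g, hg, rfl⟩
      exact ⟨g, hg, rfl⟩
    · rintro ⟨g, hg, hgi⟩
      refine ⟨g, hg, funext fun j => ?_⟩
      rw [Subsingleton.elim j 0]
      exact hgi
  rw [heq] at h; exact h

lemma def_inj : A.Definable Larith {g : Fin n → M | Function.Injective g} := by
  classical
  have heq : {g : Fin n → M | Function.Injective g}
      = ⋂ i ∈ (Finset.univ : Finset (Fin n)), ⋂ j ∈ (Finset.univ : Finset (Fin n)),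
          (if i = j then (univ : Set (Fin n → M)) else {g | g i = g j}ᶜ) := by
    ext g
    simp only [mem_setOf_eq, Set.mem_iInter, Finset.mem_univ, forall_const]
    constructor
    · intro hg i j
      split
      · exact trivial
      · next h => exact fun hgij => h (hg hgij)
    · intro h i j hgij
      by_contra hij
      have := h i j
      rw [if_neg hij] at this
      exact this hgij
  rw [heq]
  refine definable_biInter_finset (fun i => definable_biInter_finset (fun j => ?_) _) _
  split
  · exact definable_univ
  · exact (defEq _ _).compl

end Toolkit

section LNP
variable {M : Type*} [ArithData M] (hPA : IsPAModel M)
include hPA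

lemma lnp (S : Set (Fin 1 → M)) (hdef : Set.Definable (Set.univ : Set M) Larith S)
    (hne : ∃ x : M, (fun _ => x) ∈ S) :
    ∃ m : M, (fun _ => m) ∈ S ∧ ∀ y : M, (fun _ => y) ∈ S → ¬ y < m := by
  obtain ⟨-, -, -, -, -, -, -, -, htrans, hirr, htri, -, -, -, hzle, hsucc, -, hind⟩ := hPA
  have not_lt_zero : ∀ y : M, ¬ y < 0 := by
    intro y hy
    rcases hzle y with rfl | h
    · exact hirr _ hy
    · exact hirr _ (htrans _ _ _ h hy)
  have le_of_lt_succ : ∀ y x : M, y < x + 1 → y < x ∨ y = x := by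
    intro y x hy
    rcases htri y x with h | h | h
    · exact Or.inl h
    · exact Or.inr h
    · rcases hsucc x y h with h1 | h1
      · exact absurd (h1 ▸ hy) (hirr _)
      · exact absurd (htrans _ _ _ hy h1) (hirr _)
  by_contra hno
  set T : Set (Fin 1 → M) :=
    {f : Fin 1 → M | ∀ y : M, (y < f 0 ∨ y = f 0) → (fun _ => y) ∉ S} with hT
  have hTdef : Set.Definable (Set.univ : Set M) Larith T := by
    have hE : Set.Definable (Set.univ : Set M) Larith
        ((({g : Fin 2 → M | g 1 < g 0} ∪ {g : Fin 2 → M | g 1 = g 0}) ∩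
          {g : Fin 2 → M | (fun _ => g 1) ∈ S})) :=
      ((defLT 1 0).union (defEq 1 0)).inter (def_pre1 1 S hdef)
    have h := (def_ex2 _ hE).compl
    have heq : {f : Fin 1 → M | ∃ y : M,
        ![f 0, y] ∈ (({g : Fin 2 → M | g 1 < g 0} ∪ {g : Fin 2 → M | g 1 = g 0}) ∩
          {g : Fin 2 → M | (fun _ => g 1) ∈ S})}ᶜ = T := by
      ext f
      simp only [hT, mem_compl_iff, mem_setOf_eq, mem_inter_iff, mem_union,
        Matrix.cons_val_zero, Matrix.cons_val_one, Matrix.head_cons,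
 not_exists, not_and, not_or]
    rw [heq] at h; exact h
  have hbase : (fun _ => (0 : M)) ∈ T := by
    intro y hy hyS
    rcases hy with hy | rfl
    · exact not_lt_zero y hy
    · exact hno ⟨0, hyS, fun z _ hz => not_lt_zero z hz⟩
  have hstep : ∀ x : M, (fun _ => x) ∈ T → (fun _ => x + 1) ∈ T := by
    intro x hx y hy hyS
    rcases hy with hy | rfl
    · rcases le_of_lt_succ y x hy with h | h
      · exact hx y (Or.inl h) hyS
      · exact hx y (Or.inr h) hyS
    · refine hno ⟨x + 1, hyS, fun z hz hzlt => ?_⟩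
      rcases le_of_lt_succ z x hzlt with h | h
      · exact hx z (Or.inl h) hz
      · exact hx z (Or.inr h) hz
  obtain ⟨x0, hx0⟩ := hne
  exact (hind T hTdef hbase hstep x0) x0 (Or.inr rfl) hx0

lemma least_def {a : M} (S : Set (Fin 1 → M)) (hS : Set.Definable ({a} : Set M) Larith S)
    (hne : ∃ x : M, (fun _ => x) ∈ S) :
    ∃ m : M, (fun _ => m) ∈ S ∧
      Set.Definable ({a} : Set M) Larith {f : Fin 1 → M | f 0 = m} := by
  obtain ⟨m, hmS, hmin⟩ := lnp hPA S (hS.mono (subset_univ _)) hne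
  obtain ⟨-, -, -, -, -, -, -, -, -, -, htri, -⟩ := hPA
  refine ⟨m, hmS, ?_⟩
  have hE : Set.Definable ({a} : Set M) Larith
      ({g : Fin 2 → M | g 1 < g 0} ∩ {g : Fin 2 → M | (fun _ => g 1) ∈ S}) :=
    (defLT 1 0).inter (def_pre1 1 S hS)
  have h := hS.inter (def_ex2 _ hE).compl
  have heq : S ∩ {f : Fin 1 → M | ∃ y : M,
      ![f 0, y] ∈ ({g : Fin 2 → M | g 1 < g 0} ∩ {g : Fin 2 → M | (fun _ => g 1) ∈ S})}ᶜ
      = {f : Fin 1 → M | f 0 = m} := by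
    ext f
    simp only [mem_inter_iff, mem_compl_iff, mem_setOf_eq,
      Matrix.cons_val_zero, Matrix.cons_val_one, Matrix.head_cons, not_exists, not_and]
    constructor
    · rintro ⟨hfS, hmin'⟩
      have hf0 : (fun _ => f 0) ∈ S := by rw [← eq_const f]; exact hfS
      rcases htri (f 0) m with h | h | h
      · exact absurd h (hmin (f 0) hf0)
      · exact h
      · exact absurd hmS (hmin' m h)
    · intro hf
      constructor
      · rw [eq_const f, hf]; exact hmS
      · intro y hy hyS
        exact hmin y hyS (hf ▸ hy)
  rw [heq] at h; exact h

lemma lexLeast {n : ℕ} {a : M} (D : Set (Fin n → M))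
    (hD : Set.Definable ({a} : Set M) Larith D) (hne : D.Nonempty) :
    ∃ c ∈ D, ∀ i : Fin n,
      Set.Definable ({a} : Set M) Larith {f : Fin 1 → M | f 0 = c i} := by
  have key : ∀ k : ℕ, ∃ D' : Set (Fin n → M), D' ⊆ D ∧
      Set.Definable ({a} : Set M) Larith D' ∧ D'.Nonempty ∧
      ∀ g ∈ D', ∀ i : Fin n, (i : ℕ) < k →
        Set.Definable ({a} : Set M) Larith {f : Fin 1 → M | f 0 = g i} := by
    intro k
    induction k with
    | zero => exact ⟨D, subset_rfl, hD, hne, fun g _ i hi => absurd hi (Nat.not_lt_zero _)⟩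
    | succ k ih =>
      obtain ⟨D', h1, h2, h3, h4⟩ := ih
      by_cases hk : k < n
      · set i : Fin n := ⟨k, hk⟩ with hi
        have hPdef := def_proj i D' h2
        have hPne : ∃ x : M, (fun _ => x) ∈ {f : Fin 1 → M | ∃ g ∈ D', g i = f 0} := by
          obtain ⟨g0, hg0⟩ := h3
          exact ⟨g0 i, g0, hg0, rfl⟩
        obtain ⟨m, hmP, hsing⟩ := least_def hPA _ hPdef hPne
        refine ⟨D' ∩ {g : Fin n → M | g i = m}, fun g hg => h1 hg.1, ?_, ?_, ?_⟩
        · exact h2.inter (hsing.preimage_comp (fun _ : Fin 1 => i))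
        · obtain ⟨g, hg, hgi⟩ := hmP
          exact ⟨g, hg, hgi⟩
        · rintro g ⟨hgD', hgi⟩ j hj
          rcases Nat.lt_or_ge (j : ℕ) k with h | h
          · exact h4 g hgD' j h
          · have : j = i := Fin.ext (Nat.le_antisymm (Nat.lt_succ_iff.mp hj) h)
            rw [this, hgi]
            exact hsing
      · refine ⟨D', h1, h2, h3, fun g hg j hj => h4 g hg j ?_⟩
        exact Nat.lt_of_lt_of_le j.isLt (Nat.not_lt.mp hk)
  obtain ⟨D', h1, -, ⟨c, hc⟩, h4⟩ := key n
  exact ⟨c, h1 hc, fun i => h4 c hc i i.isLt⟩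

end LNP

/-- In any model of PA, every strongly CP-generic set is CP-generic. -/
theorem strongCP_implies_CP (M : Type*) [ArithData M] (hPA : IsPAModel M) (X : Set M)
    (hX : StrongCPGeneric M X) : CPGeneric M X := by
  intro n a D hD I hb
  obtain ⟨b, hbD, hbinj, hbScl⟩ := hb
  cases n with
  | zero => exact ⟨b, hbD, fun i => i.elim0⟩
  | succ n =>
    classical
    set Dstar : Set (Fin (n + 1) → M) := D ∩ {g | Function.Injective g} with hDstarEq
    have hDstarDef : Set.Definable ({a} : Set M) Larith Dstar := hD.inter def_inj
    have hbDstar : b ∈ Dstar := ⟨hbD, hbinj⟩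
    have step : ∀ E : Set (Fin (n + 1) → M), Set.Definable ({a} : Set M) Larith E → b ∈ E →
        ∃ (c : Fin (n + 1) → M) (E' : Set (Fin (n + 1) → M)), c ∈ E ∧
          Set.Definable ({a} : Set M) Larith E' ∧ b ∈ E' ∧ E' ⊆ E ∧
          ∀ g ∈ E', ∀ i i', g i ≠ c i' := by
      intro E hEdef hbE
      obtain ⟨c, hcE, hcs⟩ := lexLeast hPA E hEdef ⟨b, hbE⟩
      refine ⟨c, E ∩ ⋂ i ∈ (Finset.univ : Finset (Fin (n + 1))),
        ⋂ i' ∈ (Finset.univ : Finset (Fin (n + 1))), {g : Fin (n + 1) → M | g i = c i'}ᶜ,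
        hcE, ?_, ?_, inter_subset_left, ?_⟩
      · refine hEdef.inter (definable_biInter_finset (fun i =>
          definable_biInter_finset (fun i' => ?_) _) _)
        have h := ((hcs i').preimage_comp (fun _ : Fin 1 => i)).compl
        have heq : ((fun g : Fin (n + 1) → M => g ∘ fun _ : Fin 1 => i) ⁻¹'
            {f : Fin 1 → M | f 0 = c i'}) = {g : Fin (n + 1) → M | g i = c i'} := rfl
        rw [heq] at h
        exact h
      · refine ⟨hbE, ?_⟩
        simp only [Set.mem_iInter, mem_compl_iff, mem_setOf_eq, Finset.mem_univ, forall_const]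
        intro i i' heq
        exact hbScl i (heq ▸ hcs i')
      · rintro g ⟨-, hg⟩ i i'
        simp only [Set.mem_iInter, mem_compl_iff, mem_setOf_eq, Finset.mem_univ,
          forall_const] at hg
        exact hg i i'
    have step' : ∀ p : {E : Set (Fin (n + 1) → M) //
        E ⊆ Dstar ∧ Set.Definable ({a} : Set M) Larith E ∧ b ∈ E},
        ∃ q : (Fin (n + 1) → M) × {E : Set (Fin (n + 1) → M) //
          E ⊆ Dstar ∧ Set.Definable ({a} : Set M) Larith E ∧ b ∈ E},
          q.1 ∈ p.val ∧ q.2.val ⊆ p.val ∧ ∀ g ∈ q.2.val, ∀ i i', g i ≠ q.1 i' := by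
      rintro ⟨E, hEsub, hEdef, hbE⟩
      obtain ⟨c, E', hcE, hE'def, hbE', hE'sub, hdisj⟩ := step E hEdef hbE
      exact ⟨⟨c, ⟨E', hE'sub.trans hEsub, hE'def, hbE'⟩⟩, hcE, hE'sub, hdisj⟩
    choose F hF1 hF2 hF3 using step'
    let seq : ℕ → {E : Set (Fin (n + 1) → M) //
        E ⊆ Dstar ∧ Set.Definable ({a} : Set M) Larith E ∧ b ∈ E} :=
      fun k => Nat.rec ⟨Dstar, subset_rfl, hDstarDef, hbDstar⟩ (fun _ p => (F p).2) k
    let c : ℕ → Fin (n + 1) → M := fun k => (F (seq k)).1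
    have hck : ∀ k, c k ∈ (seq k).val := fun k => hF1 _
    have hmono : ∀ j k : ℕ, j ≤ k → (seq k).val ⊆ (seq j).val := by
      intro j k h
      induction h with
      | refl => exact subset_rfl
      | step _ ih => exact (hF2 _).trans ih
    have hdisj : ∀ j k : ℕ, j < k → ∀ i i', c k i ≠ c j i' := by
      intro j k hjk i i'
      have h1 : c k ∈ (seq (j + 1)).val := hmono _ _ hjk (hck k)
      exact hF3 (seq j) (c k) h1 i i'
    have hcinj : Function.Injective c := by
      intro j k hjk
      by_contra hne
      rcases Nat.lt_trichotomy j k with h | h | h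
      · exact hdisj j k h 0 0 (congrFun hjk 0).symm
      · exact hne h
      · exact hdisj k j h 0 0 (congrFun hjk 0)
    refine hX (n + 1) D (hD.mono (subset_univ _)) I ⟨Set.range c, ?_, ?_, ?_, ?_⟩
    · rintro _ ⟨k, rfl⟩
      exact ((seq k).prop.1 (hck k)).1
    · exact Set.infinite_range_of_injective hcinj
    · rintro _ ⟨k, rfl⟩
      exact ((seq k).prop.1 (hck k)).2
    · rintro _ ⟨j, rfl⟩ _ ⟨k, rfl⟩ hne i i'
      have hjk : j ≠ k := fun h => hne (by rw [h])
      rcases Nat.lt_trichotomy j k with h | h | h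
      · exact (hdisj j k h i' i).symm
      · exact absurd h hjk
      · exact hdisj k j h i i'
end

section
/- Every $\mathcal{M}$-Cohen generic subset of a model $\mathcal{M} \models \mathsf{PA}$ is strongly CP-generic. -/
open FirstOrder Language Set

open FirstOrder Language Set

/-- A language with a single unary predicate symbol `P`. -/
abbrev predLang : FirstOrder.Language :=
  ⟨fun _ => Empty,
   fun n => match n with
    | 1 => Unit
    | _ => Empty⟩

/-- The `predLang`-structure on `M` interpreting the predicate as `X`. -/
def predStruct (M : Type*) (X : Set M) : predLang.Structure M where
  funMap {n} f _ := Empty.elim f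
  RelMap {n} r x :=
    match n, r with
    | 1, _ => x 0 ∈ X

/-- Definability (with parameters from `A`) in the expansion `(M, X)` of a model of arithmetic
by a unary predicate for `X`. -/
def DefinableWithPred (M : Type*) [ArithData M] (X : Set M) {α : Type}
    (A : Set M) (S : Set (α → M)) : Prop :=
  letI := predStruct M X
  Set.Definable A (Larith.sum predLang) S

/-- The definable closure of `A` in the expansion `(M, X)`. -/
def dclWith (M : Type*) [ArithData M] (X : Set M) (A : Set M) : Set M :=
  { x | DefinableWithPred M X A ({ f | f 0 = x } : Set (Fin 1 → M)) }

/-- `X` is neutral: the definable closure relation of `(M, X)` coincides with the Skolem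
closure relation of `M`. -/
def Neutral (M : Type*) [ArithData M] (X : Set M) : Prop :=
  ∀ a : M, dclWith M X {a} = Scl M {a}

/-- A language with two unary predicate symbols. -/
abbrev predLang2 : FirstOrder.Language :=
  ⟨fun _ => Empty,
   fun n => match n with
    | 1 => Fin 2
    | _ => Empty⟩

/-- The `predLang2`-structure on `M` interpreting the two predicates as `Y` and `X`. -/
def predStruct2 (M : Type*) (Y X : Set M) : predLang2.Structure M where
  funMap {n} f _ := Empty.elim f
  RelMap {n} r x :=
    match n, r with
    | 1, r => if @Eq (Fin 2) r 0 then x 0 ∈ Y else x 0 ∈ X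

/-- The definable closure of `A` in the two-predicate expansion `(M, Y, X)`. -/
def dclWith2 (M : Type*) [ArithData M] (Y X : Set M) (A : Set M) : Set M :=
  { x | letI := predStruct2 M Y X
        Set.Definable A (Larith.sum predLang2) ({ f | f 0 = x } : Set (Fin 1 → M)) }

/-- Definability with parameters in the expansion `(M, ω)` of `M` by a predicate for the
standard cut. -/
def DefinableOmega (M : Type*) [ArithData M] {α : Type} (S : Set (α → M)) : Prop :=
  DefinableWithPred M (Set.range (std M)) Set.univ S

/-- The condition with domain `{a i : i < k}` (for an injective tuple `a`) and values given
by the pattern `σ`. -/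
def condOfTuple {M : Type*} [DecidableEq M] {k : ℕ} (a : Fin k → M) (σ : Fin k → Bool) :
    Finset (M × Bool) :=
  (Finset.univ : Finset (Fin k)).image fun i => (a i, σ i)

/-- A filter in the Cohen forcing poset (conditions ordered by extension). -/
def IsCondFilter {M : Type*} (G : Set (Finset (M × Bool))) : Prop :=
  (∀ p ∈ G, IsCond p) ∧
  (∀ p ∈ G, ∀ q : Finset (M × Bool), q ⊆ p → q ∈ G) ∧
  (∀ p ∈ G, ∀ q ∈ G, ∃ r ∈ G, p ⊆ r ∧ q ⊆ r)

/-- A set of conditions is dense if every condition has an extension in it. -/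
def DenseConds {M : Type*} (Δ : Set (Finset (M × Bool))) : Prop :=
  ∀ p : Finset (M × Bool), IsCond p → ∃ q, IsCond q ∧ p ⊆ q ∧ q ∈ Δ

/-- A set of conditions definable in `(M, ω)`: the upward closure of the family of conditions
obtained from a definable (in `(M, ω)`, with parameters) set of tuples together with a fixed
finite 0-1 pattern. -/
def DefinableCondSet (M : Type*) [ArithData M] [DecidableEq M]
    (Δ : Set (Finset (M × Bool))) : Prop :=
  ∃ (k : ℕ) (σ : Fin k → Bool) (E : Set (Fin k → M)), DefinableOmega M E ∧
    Δ = { q | ∃ a ∈ E, Function.Injective a ∧ condOfTuple a σ ⊆ q }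

/-- A generic filter for `M`-Cohen forcing: a filter meeting every dense set of conditions
definable in `(M, ω)`. -/
def IsGenericFilter (M : Type*) [ArithData M] [DecidableEq M]
    (G : Set (Finset (M × Bool))) : Prop :=
  IsCondFilter G ∧
    ∀ Δ : Set (Finset (M × Bool)), DefinableCondSet M Δ → DenseConds Δ → (G ∩ Δ).Nonempty

/-- `X ⊆ M` is an `M`-Cohen generic: the set of points forced to value 0 by some condition
in a generic filter. -/
def MCohenGeneric (M : Type*) [ArithData M] [DecidableEq M] (X : Set M) : Prop :=
  ∃ G : Set (Finset (M × Bool)), IsGenericFilter M G ∧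
    X = { a : M | ∃ p ∈ G, (a, false) ∈ p }

/-- Every `M`-Cohen generic subset of a model of PA is strongly CP-generic. -/
theorem cohen_implies_strongCP (M : Type*) [ArithData M] [DecidableEq M]
    (hPA : IsPAModel M) (X : Set M) (hX : MCohenGeneric M X) :
    StrongCPGeneric M X := by
  classical
  obtain ⟨G, ⟨hGfil, hGgen⟩, hXdef⟩ := hX
  intro n D hD I ⟨B, hBD, hBinf, hBinj, hBdisj⟩
  -- the pattern
  set σ : Fin n → Bool := fun i => if i ∈ I then false else true with hσ
  -- definability of D in (M, ω)
  have hD' : DefinableOmega M D := by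
    unfold DefinableOmega DefinableWithPred
    letI := predStruct M (Set.range (std M))
    exact hD.map_expansion LHom.sumInl
  -- the dense set of conditions
  set Δ : Set (Finset (M × Bool)) :=
    { q | ∃ a ∈ D, Function.Injective a ∧ condOfTuple a σ ⊆ q } with hΔ
  have hΔdef : DefinableCondSet M Δ := ⟨n, σ, D, hD', rfl⟩
  have hΔdense : DenseConds Δ := by
    intro p hp
    -- find a tuple in B avoiding the domain of p
    have hbad : {b ∈ B | ∃ i, b i ∈ condDom p}.Finite := by
      have hsub : {b ∈ B | ∃ i, b i ∈ condDom p} ⊆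
          ⋃ m ∈ (condDom p : Finset M), {b ∈ B | ∃ i, b i = m} := by
        rintro b ⟨hbB, i, hi⟩
        exact Set.mem_biUnion hi ⟨hbB, i, rfl⟩
      refine Set.Finite.subset (Set.Finite.biUnion (condDom p).finite_toSet ?_) hsub
      intro m _
      apply Set.Subsingleton.finite
      rintro b ⟨hbB, i, hbi⟩ c ⟨hcB, j, hcj⟩
      by_contra hbc
      exact hBdisj b hbB c hcB hbc i j (hbi.trans hcj.symm)
    obtain ⟨a, haB⟩ := (hBinf.diff hbad).nonempty
    have haD : a ∈ D := hBD haB.1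
    have hainj : Function.Injective a := hBinj a haB.1
    have havoid : ∀ i, a i ∉ condDom p := by
      intro i hi
      exact haB.2 ⟨haB.1, i, hi⟩
    refine ⟨p ∪ condOfTuple a σ, ?_, Finset.subset_union_left, a, haD, hainj,
      Finset.subset_union_right⟩
    -- the union is a condition
    intro m b b' hb hb'
    have hC : ∀ ⦃b : Bool⦄, (m, b) ∈ condOfTuple a σ → (m, b) ∉ p ∧ ∃ i, a i = m ∧ σ i = b := by
      intro b hb
      simp only [condOfTuple, Finset.mem_image, Finset.mem_univ, true_and] at hb
      obtain ⟨i, hi⟩ := hb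
      have h1 : a i = m := congrArg Prod.fst hi
      have h2 : σ i = b := congrArg Prod.snd hi
      refine ⟨fun hmem => havoid i ?_, i, h1, h2⟩
      rw [h1]
      exact Finset.mem_image_of_mem Prod.fst hmem
    rcases Finset.mem_union.1 hb with hb | hb <;>
      rcases Finset.mem_union.1 hb' with hb' | hb'
    · exact hp hb hb'
    · obtain ⟨_, i, hi, _⟩ := hC hb'
      exact absurd (Finset.mem_image_of_mem Prod.fst hb : m ∈ condDom p) (hi ▸ havoid i)
    · obtain ⟨_, i, hi, _⟩ := hC hb
      exact absurd (Finset.mem_image_of_mem Prod.fst hb' : m ∈ condDom p) (hi ▸ havoid i)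
    · obtain ⟨_, i, hi1, hi2⟩ := hC hb
      obtain ⟨_, j, hj1, hj2⟩ := hC hb'
      rw [← hi2, ← hj2, hainj (hi1.trans hj1.symm)]
  -- apply genericity
  obtain ⟨p, hpG, a, haD, hainj, hap⟩ := hGgen Δ hΔdef hΔdense
  obtain ⟨hGcond, hGdown, hGdir⟩ := hGfil
  have hmem : ∀ i, (a i, σ i) ∈ p := by
    intro i
    exact hap (Finset.mem_image_of_mem _ (Finset.mem_univ i))
  refine ⟨a, haD, fun i => ?_⟩
  rw [hXdef]
  constructor
  · rintro ⟨q, hqG, hq⟩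
    by_contra hiI
    have hσi : σ i = true := by simp [hσ, hiI]
    obtain ⟨r, hrG, hpr, hqr⟩ := hGdir p hpG q hqG
    have := hGcond r hrG (hpr (hmem i)) (hqr hq)
    rw [hσi] at this
    simp at this
  · intro hiI
    have hσi : σ i = false := by simp [hσ, hiI]
    exact ⟨p, hpG, by rw [← hσi]; exact hmem i⟩
end

section
/- If $\mathcal{M} \models \mathsf{PA}$ is nonstandard and $X \subseteq M$ is a class (i.e., every bounded initial portion $\{x \in X : x < a\}$ is definable), then $X$ is not strongly CP-generic. -/
open FirstOrder Language Set

open FirstOrder Language Set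

section Helpers
variable {M : Type*} [ArithData M]

lemma larith_lt_definable (b : M) :
    Set.Definable (Set.univ : Set M) Larith ({f | f 0 < b} : Set (Fin 1 → M)) := by
  refine ⟨Relations.formula₂ (Sum.inl (() : Larith.Relations 2))
    (Term.var 0) ((Larith.con (⟨b, trivial⟩ : (Set.univ : Set M))).term), ?_⟩
  ext f
  simp [Formula.realize_rel₂]
  rfl

lemma fin1_ext (g c : Fin 1 → M) (h : g 0 = c 0) : g = c :=
  funext fun k => by rw [Subsingleton.elim k (0 : Fin 1)]; exact h

end Helpers

/-- In a nonstandard model of PA, no class (a set all of whose bounded initial portions are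
definable) is strongly CP-generic. -/

theorem class_not_strongCP (M : Type*) [ArithData M] (hPA : IsPAModel M)
    (hns : Set.range (std M) ≠ Set.univ) (X : Set M)
    (hclass : ∀ a : M,
      Set.Definable (Set.univ : Set M) Larith ({ f | f 0 ∈ X ∧ f 0 < a } : Set (Fin 1 → M))) :
    ¬ StrongCPGeneric M X := by
  intro hSCP
  obtain ⟨hadd_assoc, hadd_comm, hadd_zero, hmul_assoc, hmul_comm, hmul_one, hmul_zero,
    hdistr, htrans, hirr, htri, hadd_lt, hadd_cancel, h01, hpos, hdisc, hsub, hind⟩ := hPA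
  -- std is strictly increasing
  have hstd_succ : ∀ n : ℕ, std M n < std M (n + 1) := by
    intro n
    have h := hadd_lt 0 1 (std M n) h01
    rw [hadd_comm 0, hadd_comm 1, hadd_zero] at h
    exact h
  have hstd_mono : ∀ n m : ℕ, m < n → std M m < std M n := by
    intro n
    induction n with
    | zero => intro m h; exact absurd h (Nat.not_lt_zero m)
    | succ k ih =>
      intro m h
      rcases Nat.lt_succ_iff_lt_or_eq.mp h with h' | h'
      · exact htrans _ _ _ (ih m h') (hstd_succ k)
      · subst h'; exact hstd_succ m
  have hstd_inj : Function.Injective (std M) := by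
    intro m n h
    rcases Nat.lt_trichotomy m n with h' | h' | h'
    · exact absurd (h ▸ hstd_mono n m h') (hirr _)
    · exact h'
    · exact absurd (h ▸ hstd_mono m n h') (hirr _)
  have hnotlt0 : ∀ x : M, ¬ x < 0 := by
    intro x hx
    rcases hpos x with h | h
    · exact hirr 0 (h ▸ hx)
    · exact hirr 0 (htrans _ _ _ h hx)
  -- everything below a standard number is standard
  have hbelow : ∀ n : ℕ, ∀ x : M, x < std M n → ∃ m, std M m = x := by
    intro n
    induction n with
    | zero => intro x hx; exact absurd hx (hnotlt0 x)
    | succ k ih =>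
      intro x hx
      rcases htri x (std M k) with h | h | h
      · exact ih x h
      · exact ⟨k, h.symm⟩
      · rcases hdisc _ _ h with h' | h'
        · exact ⟨k + 1, h'⟩
        · exact absurd (htrans _ _ _ hx h') (hirr _)
  obtain ⟨b, hb⟩ := (Set.ne_univ_iff_exists_notMem _).mp hns
  have hstd_lt_b : ∀ n : ℕ, std M n < b := by
    intro n
    rcases htri b (std M n) with h | h | h
    · exact absurd (hbelow n b h) hb
    · exact absurd ⟨n, h.symm⟩ hb
    · exact h
  have hLinf : ({x : M | x < b}).Infinite :=
    Set.infinite_of_injective_forall_mem hstd_inj hstd_lt_b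
  have hsplit : (X ∩ {x : M | x < b}).Infinite ∨ ({x : M | x < b} \ X).Infinite := by
    by_contra h
    rw [not_or, Set.not_infinite, Set.not_infinite] at h
    refine hLinf (Set.Finite.subset (h.1.union h.2) ?_)
    intro x hx
    by_cases hxX : x ∈ X
    · exact Or.inl ⟨hxX, hx⟩
    · exact Or.inr ⟨hx, hxX⟩
  -- a helper producing the "B" witness for any D of the form {f | f 0 ∈ S}
  have hwit : ∀ (S : Set M), S.Infinite → ∀ (D : Set (Fin 1 → M)),
      (∀ x ∈ S, (fun _ : Fin 1 => x) ∈ D) →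
      (∃ B : Set (Fin 1 → M), B ⊆ D ∧ B.Infinite ∧ (∀ g ∈ B, Function.Injective g) ∧
        (∀ g ∈ B, ∀ c ∈ B, g ≠ c → ∀ i j, g i ≠ c j)) := by
    intro S hS D hSD
    refine ⟨(fun x : M => fun _ : Fin 1 => x) '' S, ?_, ?_, ?_, ?_⟩
    · rintro g ⟨x, hx, rfl⟩; exact hSD x hx
    · exact hS.image (fun x hx y hy h => congrFun h 0)
    · intro g _ i j _; exact Subsingleton.elim i j
    · rintro g hg c hc hne i j hgc
      rw [Subsingleton.elim i (0 : Fin 1), Subsingleton.elim j (0 : Fin 1)] at hgc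
      exact hne (fin1_ext g c hgc)
  rcases hsplit with hS | hS
  · -- X ∩ [0,b) infinite: use D = {f | f 0 ∈ X ∧ f 0 < b} and I = ∅
    obtain ⟨f, hfD, hf⟩ := hSCP 1 _ (hclass b) ∅
      (hwit _ hS _ (fun x hx => ⟨hx.1, hx.2⟩))
    exact (hf 0).mp hfD.1
  · -- [0,b) \ X infinite: use D = {f | f 0 < b} \ {f | f 0 ∈ X ∧ f 0 < b} and I = univ
    obtain ⟨f, hfD, hf⟩ := hSCP 1 _ ((larith_lt_definable b).sdiff (hclass b)) Set.univ
      (hwit _ hS _ (fun x hx => ⟨hx.1, fun h => hx.2 h.1⟩))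
    exact hfD.2 ⟨(hf 0).mpr trivial, hfD.1⟩
end

section
/- If all sufficiently large elements of a model $\mathcal{M} \models \mathsf{PA}$ generate $\mathcal{M}$, then either $\mathcal{M}$ is prime (generated by $0$) or $\mathcal{M}$ is a superminimal elementary end extension of some proper elementary submodel $\mathcal{N} \prec \mathcal{M}$. -/
open FirstOrder Language Set

open FirstOrder Language Set

set_option linter.unusedSectionVars false
section Superminimal

open FirstOrder Language Set

variable {M : Type*} [ArithData M]

/-- non-strict order -/
def mle (x y : M) : Prop := x < y ∨ x = y

namespace SMaux

variable (hPA : IsPAModel M)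
lemma mle_refl (x : M) : mle x x := Or.inr rfl
include hPA

lemma paAddAssoc : ∀ x y z : M, x + (y + z) = (x + y) + z := hPA.1
lemma paAddComm : ∀ x y : M, x + y = y + x := hPA.2.1
lemma paAddZero : ∀ x : M, x + 0 = x := hPA.2.2.1
lemma paMulComm : ∀ x y : M, x * y = y * x := hPA.2.2.2.2.1
lemma paDistrib : ∀ x y z : M, x * (y + z) = x * y + x * z := hPA.2.2.2.2.2.2.2.1
lemma paLtTrans : ∀ x y z : M, x < y → y < z → x < z := hPA.2.2.2.2.2.2.2.2.1
lemma paLtIrrefl : ∀ x : M, ¬ x < x := hPA.2.2.2.2.2.2.2.2.2.1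
lemma paTri : ∀ x y : M, x < y ∨ x = y ∨ y < x := hPA.2.2.2.2.2.2.2.2.2.2.1
lemma paAddLt : ∀ x y z : M, x < y → x + z < y + z := hPA.2.2.2.2.2.2.2.2.2.2.2.1
lemma paAddCancel : ∀ x y z : M, x + z = y + z → x = y := hPA.2.2.2.2.2.2.2.2.2.2.2.2.1
lemma paZeroLtOne : (0 : M) < 1 := hPA.2.2.2.2.2.2.2.2.2.2.2.2.2.1
lemma paZeroOr : ∀ x : M, x = 0 ∨ 0 < x := hPA.2.2.2.2.2.2.2.2.2.2.2.2.2.2.1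
lemma paDisc : ∀ x y : M, x < y → (x + 1 = y ∨ x + 1 < y) := hPA.2.2.2.2.2.2.2.2.2.2.2.2.2.2.2.1
lemma paDiff : ∀ x y : M, x < y → ∃ z : M, x + z = y := hPA.2.2.2.2.2.2.2.2.2.2.2.2.2.2.2.2.1
lemma paInd : ∀ S : Set (Fin 1 → M), Set.Definable (Set.univ : Set M) Larith S →
    (fun _ => (0 : M)) ∈ S → (∀ x : M, (fun _ => x) ∈ S → (fun _ => x + 1) ∈ S) →
    ∀ x : M, (fun _ => x) ∈ S := hPA.2.2.2.2.2.2.2.2.2.2.2.2.2.2.2.2.2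



lemma mle_trans {x y z : M} (h1 : mle x y) (h2 : mle y z) : mle x z := by
  rcases h1 with h1 | rfl
  · rcases h2 with h2 | rfl
    · exact Or.inl (paLtTrans hPA _ _ _ h1 h2)
    · exact Or.inl h1
  · exact h2

lemma lt_of_lt_of_mle {x y z : M} (h1 : x < y) (h2 : mle y z) : x < z := by
  rcases h2 with h2 | rfl
  · exact paLtTrans hPA _ _ _ h1 h2
  · exact h1

lemma lt_of_mle_of_lt {x y z : M} (h1 : mle x y) (h2 : y < z) : x < z := by
  rcases h1 with h1 | rfl
  · exact paLtTrans hPA _ _ _ h1 h2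
  · exact h2

lemma not_lt_of_mle {x y : M} (h : mle x y) : ¬ y < x := fun hlt =>
  paLtIrrefl hPA x (lt_of_mle_of_lt hPA h hlt)

lemma mle_of_not_lt {x y : M} (h : ¬ y < x) : mle x y := by
  rcases paTri hPA x y with h1 | h1 | h1
  · exact Or.inl h1
  · exact Or.inr h1
  · exact absurd h1 h

lemma mle_antisymm {x y : M} (h1 : mle x y) (h2 : mle y x) : x = y := by
  rcases h1 with h1 | rfl
  · exact absurd h1 (not_lt_of_mle hPA h2)
  · rfl

lemma zero_mle (x : M) : mle (0 : M) x := by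
  rcases paZeroOr hPA x with rfl | h
  · exact Or.inr rfl
  · exact Or.inl h

lemma zero_add' (x : M) : (0 : M) + x = x := by
  rw [paAddComm hPA]; exact paAddZero hPA x

lemma lt_succ_self (x : M) : x < x + 1 := by
  have h := paAddLt hPA 0 1 x (paZeroLtOne hPA)
  rwa [zero_add' hPA, paAddComm hPA 1 x] at h

lemma mle_add_right (x z : M) : mle x (x + z) := by
  rcases paZeroOr hPA z with rfl | h
  · exact Or.inr (paAddZero hPA x).symm
  · have h2 := paAddLt hPA 0 z x h
    rw [zero_add' hPA, paAddComm hPA z x] at h2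
    exact Or.inl h2

lemma mle_add_left (x z : M) : mle x (z + x) := by
  rw [paAddComm hPA]; exact mle_add_right hPA x z

lemma succ_mle_of_lt {x y : M} (h : x < y) : mle (x + 1) y := by
  rcases paDisc hPA x y h with h1 | h1
  · exact Or.inr h1
  · exact Or.inl h1

lemma mle_of_lt_succ {x y : M} (h : x < y + 1) : mle x y := by
  refine mle_of_not_lt hPA (fun hlt => ?_)
  have h2 := succ_mle_of_lt hPA hlt
  have h3 := lt_of_lt_of_mle hPA h h2
  exact paLtIrrefl hPA _ h3

lemma mle_add_mono_right {x y : M} (z : M) (h : mle x y) : mle (x + z) (y + z) := by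
  rcases h with h | rfl
  · exact Or.inl (paAddLt hPA _ _ _ h)
  · exact Or.inr rfl

lemma mle_add_mono {a b c d : M} (h1 : mle a b) (h2 : mle c d) : mle (a + c) (b + d) := by
  refine mle_trans hPA (mle_add_mono_right hPA c h1) ?_
  rw [paAddComm hPA b c, paAddComm hPA b d]
  exact mle_add_mono_right hPA b h2

lemma mle_mul_mono_right {x y : M} (z : M) (h : mle x y) : mle (x * z) (y * z) := by
  rcases h with h | rfl
  · rcases paDiff hPA x y h with ⟨d, rfl⟩
    rw [paMulComm hPA (x + d) z, paDistrib hPA, paMulComm hPA z x]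
    exact mle_add_right hPA _ _
  · exact Or.inr rfl

lemma mle_mul_mono {a b c d : M} (h1 : mle a b) (h2 : mle c d) : mle (a * c) (b * d) := by
  refine mle_trans hPA (mle_mul_mono_right hPA c h1) ?_
  rw [paMulComm hPA b c, paMulComm hPA b d]
  exact mle_mul_mono_right hPA b h2

end SMaux
end Superminimal
section Superminimal2
open FirstOrder Language Set

variable {M : Type*} [ArithData M]

/-- `P` is an `A`-definable `n`-ary predicate. -/
def DefP (A : Set M) (n : ℕ) (P : (Fin n → M) → Prop) : Prop :=
  Set.Definable A Larith {f : Fin n → M | P f}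

lemma fin_snoc_comp_castSucc_last {α : Type*} {n : ℕ} (g : Fin (n+1) → α) :
    Fin.snoc (g ∘ Fin.castSucc) (g (Fin.last n)) = g := by
  funext i
  refine Fin.lastCases ?_ (fun j => ?_) i
  · rw [Fin.snoc_last]
  · rw [Fin.snoc_castSucc]; rfl

namespace DefP

variable {A : Set M} {n : ℕ}

lemma congr' {P Q : (Fin n → M) → Prop} (h : DefP A n P) (hiff : ∀ f, P f ↔ Q f) :
    DefP A n Q := by
  have hs : {f : Fin n → M | P f} = {f | Q f} := Set.ext hiff
  unfold DefP at h ⊢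
  rwa [hs] at h

lemma and {P Q : (Fin n → M) → Prop} (h1 : DefP A n P) (h2 : DefP A n Q) :
    DefP A n (fun f => P f ∧ Q f) := Set.Definable.inter h1 h2

lemma or {P Q : (Fin n → M) → Prop} (h1 : DefP A n P) (h2 : DefP A n Q) :
    DefP A n (fun f => P f ∨ Q f) := Set.Definable.union h1 h2

lemma not {P : (Fin n → M) → Prop} (h : DefP A n P) : DefP A n (fun f => ¬ P f) :=
  Set.Definable.compl h

lemma imp {P Q : (Fin n → M) → Prop} (h1 : DefP A n P) (h2 : DefP A n Q) :
    DefP A n (fun f => P f → Q f) :=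
  ((h1.not).or h2).congr' (fun f => by tauto)

lemma reindex {k : ℕ} {P : (Fin k → M) → Prop} (h : DefP A k P) (ρ : Fin k → Fin n) :
    DefP A n (fun f => P (f ∘ ρ)) := Set.Definable.preimage_comp ρ h

lemma ex {P : (Fin (n+1) → M) → Prop} (h : DefP A (n+1) P) :
    DefP A n (fun f => ∃ a : M, P (Fin.snoc f a)) := by
  have h2 := Set.Definable.image_comp h (Fin.castSucc : Fin n → Fin (n+1))
  have hs : ((fun g : Fin (n+1) → M => g ∘ Fin.castSucc) '' {f | P f})
      = {f : Fin n → M | ∃ a : M, P (Fin.snoc f a)} := by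
    ext f
    constructor
    · rintro ⟨g, hg, rfl⟩
      exact ⟨g (Fin.last n), by rwa [fin_snoc_comp_castSucc_last g]⟩
    · rintro ⟨a, ha⟩
      exact ⟨Fin.snoc f a, ha, Fin.snoc_comp_castSucc⟩
  rwa [hs] at h2

lemma all {P : (Fin (n+1) → M) → Prop} (h : DefP A (n+1) P) :
    DefP A n (fun f => ∀ a : M, P (Fin.snoc f a)) :=
  (h.not.ex).not.congr' (fun f => by
    constructor
    · intro hne a
      by_contra hc
      exact hne ⟨a, hc⟩
    · rintro hall ⟨a, ha⟩
      exact ha (hall a))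

end DefP

end Superminimal2
section Superminimal3
open FirstOrder Language Set

variable {M : Type*} [ArithData M] {A : Set M}

lemma defp_lt : DefP A 2 (fun f : Fin 2 → M => f 0 < f 1) := by
  refine Set.Definable.mono (Set.empty_definable_iff.2
    ⟨Relations.formula₂ (() : Larith.Relations 2) (Term.var 0) (Term.var 1), ?_⟩)
    (Set.empty_subset A)
  ext f
  simp only [Set.mem_setOf_eq, Formula.realize_rel₂, Term.realize_var]
  show f 0 < f 1 ↔ _
  simp [Structure.RelMap]

lemma defp_eq : DefP A 2 (fun f : Fin 2 → M => f 0 = f 1) := by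
  refine Set.Definable.mono (Set.empty_definable_iff.2
    ⟨Term.equal (Term.var 0) (Term.var 1), ?_⟩) (Set.empty_subset A)
  ext f
  simp [Formula.realize_equal]

lemma defp_add : DefP A 3 (fun f : Fin 3 → M => f 0 + f 1 = f 2) := by
  refine Set.Definable.mono (Set.empty_definable_iff.2
    ⟨Term.equal (Term.func ((0 : Fin 2) : Larith.Functions 2) ![Term.var 0, Term.var 1]) (Term.var 2), ?_⟩)
    (Set.empty_subset A)
  ext f
  simp [Formula.realize_equal, Term.realize_func, arithStructure]
  exact Iff.rfl

lemma defp_mul : DefP A 3 (fun f : Fin 3 → M => f 0 * f 1 = f 2) := by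
  refine Set.Definable.mono (Set.empty_definable_iff.2
    ⟨Term.equal (Term.func ((1 : Fin 2) : Larith.Functions 2) ![Term.var 0, Term.var 1]) (Term.var 2), ?_⟩)
    (Set.empty_subset A)
  ext f
  simp [Formula.realize_equal, Term.realize_func, arithStructure]
  exact Iff.rfl

lemma defp_zero : DefP A 1 (fun f : Fin 1 → M => f 0 = 0) := by
  refine Set.Definable.mono (Set.empty_definable_iff.2
    ⟨Term.equal (Term.var 0) (Term.func ((0 : Fin 2) : Larith.Functions 0) ![]), ?_⟩) (Set.empty_subset A)
  ext f
  simp [Formula.realize_equal, Term.realize_func, arithStructure]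
  exact Iff.rfl

lemma defp_one : DefP A 1 (fun f : Fin 1 → M => f 0 = 1) := by
  refine Set.Definable.mono (Set.empty_definable_iff.2
    ⟨Term.equal (Term.var 0) (Term.func ((1 : Fin 2) : Larith.Functions 0) ![]), ?_⟩) (Set.empty_subset A)
  ext f
  simp [Formula.realize_equal, Term.realize_func, arithStructure]
  exact Iff.rfl

lemma defp_const {a : M} (ha : a ∈ A) : DefP A 1 (fun f : Fin 1 → M => f 0 = a) := by
  refine ⟨Term.equal (Term.var 0) ((Larith.con (⟨a, ha⟩ : A)).term), ?_⟩
  ext f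
  simp [Formula.realize_equal, Term.realize_con]

end Superminimal3
section Superminimal4
set_option linter.unusedSectionVars false
open FirstOrder Language Set

variable {M : Type*} [ArithData M] {A : Set M}

lemma defp_mle : DefP A 2 (fun f : Fin 2 → M => mle (f 0) (f 1)) :=
  (defp_lt.or defp_eq).congr' (fun f => Iff.rfl)

namespace SMaux

variable (hPA : IsPAModel M)
include hPA

lemma sm_induction (P : M → Prop) (h : DefP (Set.univ : Set M) 1 (fun f => P (f 0)))
    (h0 : P 0) (hs : ∀ x : M, P x → P (x + 1)) : ∀ x : M, P x := fun x =>
  paInd hPA {f : Fin 1 → M | P (f 0)} h h0 (fun y hy => hs y hy) x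

lemma sm_lnp (P : M → Prop) (hdef : DefP (Set.univ : Set M) 1 (fun f => P (f 0)))
    {x : M} (hx : P x) : ∃ m, P m ∧ ∀ y, P y → mle m y := by
  by_contra hno
  push_neg at hno
  have hno' : ∀ m : M, P m → ∃ y, P y ∧ y < m := by
    intro m hm
    obtain ⟨y, hy, hy2⟩ := hno m hm
    refine ⟨y, hy, ?_⟩
    rcases paTri hPA y m with h1 | h1 | h1
    · exact h1
    · exact absurd (Or.inr h1.symm) hy2
    · exact absurd (Or.inl h1) hy2
  have hQdef : DefP (Set.univ : Set M) 1 (fun f => ∀ y : M, mle y (f 0) → ¬ P y) := by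
    have h2 : DefP (Set.univ : Set M) 2 (fun g => mle (g 1) (g 0) → ¬ P (g 1)) :=
      ((defp_mle.reindex ![1, 0]).congr' (fun g => by
          simp [Function.comp])).imp ((hdef.reindex (fun _ => 1)).not)
    exact h2.all.congr' (fun f => by
      constructor
      · intro hh y hy
        have := hh y
        rw [Fin.snoc] at this
        simpa using this hy
      · intro hh a
        have := hh a
        rw [Fin.snoc]
        simpa using this)
  have hQ : ∀ z : M, ∀ y : M, mle y z → ¬ P y := by
    refine sm_induction hPA _ hQdef ?_ ?_
    · intro y hy hPy
      have hy0 : y = 0 := mle_antisymm hPA hy (zero_mle hPA y)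
      subst hy0
      obtain ⟨y', hy', hlt⟩ := hno' 0 hPy
      exact not_lt_of_mle hPA (zero_mle hPA y') hlt
    · intro z hz y hy hPy
      rcases hy with hy | rfl
      · exact hz y (mle_of_lt_succ hPA hy) hPy
      · obtain ⟨y', hy', hlt⟩ := hno' _ hPy
        exact hz y' (mle_of_lt_succ hPA hlt) hy'
  exact hQ x x (mle_refl x) hx

lemma sm_bound (D : M → M → Prop)
    (hdef : DefP (Set.univ : Set M) 2 (fun f => D (f 0) (f 1)))
    (htot : ∀ u : M, ∃ v, D u v) :
    ∀ m : M, ∃ w, ∀ u, mle u m → ∃ v, mle v w ∧ D u v := by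
  have S4 : DefP (Set.univ : Set M) 4 (fun g => mle (g 3) (g 1) ∧ D (g 2) (g 3)) :=
    ((defp_mle.reindex ![3, 1]).congr' (fun g => by simp [Function.comp])).and
      ((hdef.reindex ![2, 3]).congr' (fun g => by simp [Function.comp]))
  have S3 : DefP (Set.univ : Set M) 3 (fun g => ∃ v : M, mle v (g 1) ∧ D (g 2) v) :=
    S4.ex.congr' (fun g => by simp +decide [Fin.snoc]; exact Iff.rfl)
  have S3' : DefP (Set.univ : Set M) 3
      (fun g => mle (g 2) (g 0) → ∃ v : M, mle v (g 1) ∧ D (g 2) v) :=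
    ((defp_mle.reindex ![2, 0]).congr' (fun g => by simp [Function.comp])).imp S3
  have S2 : DefP (Set.univ : Set M) 2
      (fun g => ∀ u : M, mle u (g 0) → ∃ v : M, mle v (g 1) ∧ D u v) :=
    S3'.all.congr' (fun g => by simp +decide [Fin.snoc])
  have S1 : DefP (Set.univ : Set M) 1
      (fun f => ∃ w : M, ∀ u : M, mle u (f 0) → ∃ v : M, mle v w ∧ D u v) :=
    S2.ex.congr' (fun f => by simp +decide [Fin.snoc])
  refine sm_induction hPA _ S1 ?_ ?_
  · obtain ⟨v0, hv0⟩ := htot 0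
    refine ⟨v0, fun u hu => ?_⟩
    have hu0 : u = 0 := mle_antisymm hPA hu (zero_mle hPA u)
    subst hu0
    exact ⟨v0, mle_refl v0, hv0⟩
  · rintro z ⟨w, hw⟩
    obtain ⟨v1, hv1⟩ := htot (z + 1)
    refine ⟨w + v1, fun u hu => ?_⟩
    rcases hu with hu | rfl
    · obtain ⟨v, hv, hDv⟩ := hw u (mle_of_lt_succ hPA hu)
      exact ⟨v, mle_trans hPA hv (mle_add_right hPA w v1), hDv⟩
    · exact ⟨v1, mle_add_left hPA v1 w, hv1⟩

end SMaux
end Superminimal4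
section Superminimal5
set_option linter.unusedSectionVars false
open FirstOrder Language Set

variable {M : Type*} [ArithData M] {A : Set M}

lemma fin_append_zero {α : Type*} {k : ℕ} (f : Fin k → α) (u : Fin 0 → α) :
    Fin.append f u = f := by
  funext i
  refine Fin.addCases (fun i1 => ?_) (fun i2 => i2.elim0) i
  rw [Fin.append_left]
  congr 1

lemma fin_append_snoc {α : Type*} {k n : ℕ} (f : Fin k → α) (u : Fin n → α) (a : α) :
    Fin.append f (Fin.snoc u a) = Fin.snoc (Fin.append f u) a := by
  funext i
  refine Fin.lastCases ?_ (fun j => ?_) i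
  · rw [Fin.snoc_last]
    show Fin.append f (Fin.snoc u a) (Fin.natAdd k (Fin.last n)) = a
    rw [Fin.append_right, Fin.snoc_last]
  · rw [Fin.snoc_castSucc]
    refine Fin.addCases (fun i1 => ?_) (fun i2 => ?_) j
    · have h2 : Fin.castSucc (Fin.castAdd n i1) = Fin.castAdd (n+1) i1 := by ext; simp
      rw [h2, Fin.append_left, Fin.append_left]
    · have h3 : Fin.castSucc (Fin.natAdd k i2) = Fin.natAdd k (Fin.castSucc i2) := by ext; simp
      rw [h3, Fin.append_right, Fin.append_right, Fin.snoc_castSucc]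

namespace DefP

lemma plug {n : ℕ} {P : (Fin (n+1) → M) → Prop} (h : DefP A (n+1) P) (a : M) (ha : a ∈ A) :
    DefP A n (fun f => P (Fin.snoc f a)) := by
  have hc : DefP A (n+1) (fun g => g (Fin.last n) = a) :=
    ((defp_const ha).reindex (fun _ => Fin.last n)).congr' (fun g => Iff.rfl)
  refine (h.and hc).ex.congr' (fun f => ?_)
  constructor
  · rintro ⟨b, hb, hlast⟩
    rw [Fin.snoc_last] at hlast
    rwa [hlast] at hb
  · intro hf
    exact ⟨a, hf, Fin.snoc_last _ _⟩

lemma bforall (z : M) (hz : z ∈ A) :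
    ∀ (n : ℕ) {k : ℕ} (P : (Fin (k + n) → M) → Prop), DefP A (k + n) P →
      DefP A k (fun f => ∀ u : Fin n → M, (∀ i, mle (u i) z) → P (Fin.append f u)) := by
  intro n
  induction n with
  | zero =>
    intro k P hP
    refine hP.congr' (fun f => ?_)
    constructor
    · intro hf u _
      rwa [fin_append_zero]
    · intro hf
      have := hf Fin.elim0 (fun i => i.elim0)
      rwa [fin_append_zero] at this
  | succ n IH =>
    intro k P hP
    have hle : DefP A (k + n + 1) (fun g => mle (g (Fin.last (k+n))) z) := by
      have h1 : DefP A 2 (fun p => p 1 = z ∧ mle (p 0) (p 1)) :=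
        (((defp_const hz).reindex (fun _ : Fin 1 => (1 : Fin 2))).congr'
          (fun p => Iff.rfl)).and defp_mle
      have h2 : DefP A 1 (fun p : Fin 1 → M => mle (p 0) z) := by
        refine h1.ex.congr' (fun p => ?_)
        have e0 : ∀ b : M, (Fin.snoc p b : Fin 2 → M) 0 = p 0 := fun b => by
          simp +decide [Fin.snoc]
        have e1 : ∀ b : M, (Fin.snoc p b : Fin 2 → M) 1 = b := fun b => by
          simp +decide [Fin.snoc]
        constructor
        · rintro ⟨b, hb1, hb2⟩
          rw [e0, e1] at hb2
          rw [e1] at hb1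
          rwa [hb1] at hb2
        · intro hp
          exact ⟨z, by rw [e1], by rw [e0, e1]; exact hp⟩
      exact (h2.reindex (fun _ => Fin.last (k+n))).congr' (fun g => Iff.rfl)
    have hQ : DefP A (k + n) (fun g => ∀ a : M, mle a z → P (Fin.snoc g a)) := by
      refine (hle.imp hP).all.congr' (fun g => ?_)
      constructor
      · intro hh a haz
        have := hh a
        rw [Fin.snoc_last] at this
        exact this haz
      · intro hh a
        rw [Fin.snoc_last]
        exact hh a
    refine (IH _ hQ).congr' (fun f => ?_)
    constructor
    · intro hf u hu
      have h4 := hf (u ∘ Fin.castSucc) (fun i => hu (Fin.castSucc i)) (u (Fin.last n))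
        (hu (Fin.last n))
      rwa [← fin_append_snoc, fin_snoc_comp_castSucc_last] at h4
    · intro hf u hu a haz
      rw [← fin_append_snoc]
      refine hf (Fin.snoc u a) (fun i => ?_)
      refine Fin.lastCases ?_ (fun j => ?_) i
      · rwa [Fin.snoc_last]
      · rw [Fin.snoc_castSucc]
        exact hu j

end DefP
end Superminimal5
section Superminimal6
set_option linter.unusedSectionVars false
open FirstOrder Language Set

variable {M : Type*} [ArithData M] {A : Set M}

namespace DefP

lemma exwit {m : ℕ} (E : (Fin m → M) → M → Prop)
    (hE : DefP A (m+1) (fun g => E (g ∘ Fin.castSucc) (g (Fin.last m)))) (j : Fin m) :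
    DefP A m (fun h => ∀ x : M, E h x → ∃ x', mle x' (h j) ∧ E h x') := by
  have hE2 : DefP A (m+2)
      (fun c => E (c ∘ Fin.castSucc ∘ Fin.castSucc) (c (Fin.last (m+1)))) := by
    have hτ := hE.reindex (fun i : Fin (m+1) =>
      if hi : (i : ℕ) < m then (⟨(i : ℕ), by omega⟩ : Fin (m+2)) else Fin.last (m+1))
    refine hτ.congr' (fun c => ?_)
    have e1 : ∀ i : Fin m, ((c ∘ fun i : Fin (m+1) =>
        if hi : (i : ℕ) < m then (⟨(i : ℕ), by omega⟩ : Fin (m+2)) else Fin.last (m+1)) ∘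
        Fin.castSucc) i = (c ∘ Fin.castSucc ∘ Fin.castSucc) i := by
      intro i
      simp only [Function.comp_apply]
      congr 1
      rw [dif_pos (by simpa using i.isLt)]
      ext
      simp
    constructor
    · intro hh
      have harg : ((c ∘ fun i : Fin (m+1) =>
          if hi : (i : ℕ) < m then (⟨(i : ℕ), by omega⟩ : Fin (m+2)) else Fin.last (m+1)) ∘
          Fin.castSucc) = (c ∘ Fin.castSucc ∘ Fin.castSucc) := funext e1
      have hlast : (c ∘ fun i : Fin (m+1) =>
          if hi : (i : ℕ) < m then (⟨(i : ℕ), by omega⟩ : Fin (m+2)) else Fin.last (m+1))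
          (Fin.last m) = c (Fin.last (m+1)) := by
        simp only [Function.comp_apply]
        congr 1
        rw [dif_neg (by simp)]
      rwa [harg, hlast] at hh
    · intro hh
      have harg : ((c ∘ fun i : Fin (m+1) =>
          if hi : (i : ℕ) < m then (⟨(i : ℕ), by omega⟩ : Fin (m+2)) else Fin.last (m+1)) ∘
          Fin.castSucc) = (c ∘ Fin.castSucc ∘ Fin.castSucc) := funext e1
      have hlast : (c ∘ fun i : Fin (m+1) =>
          if hi : (i : ℕ) < m then (⟨(i : ℕ), by omega⟩ : Fin (m+2)) else Fin.last (m+1))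
          (Fin.last m) = c (Fin.last (m+1)) := by
        simp only [Function.comp_apply]
        congr 1
        rw [dif_neg (by simp)]
      rwa [harg, hlast]
  have hmle : DefP A (m+2)
      (fun c => mle (c (Fin.last (m+1))) (c (Fin.castSucc (Fin.castSucc j)))) :=
    (defp_mle.reindex ![Fin.last (m+1), Fin.castSucc (Fin.castSucc j)]).congr'
      (fun c => by simp [Function.comp])
  have hC : DefP A (m+1)
      (fun g => ∃ a : M, mle a (g (Fin.castSucc j)) ∧ E (g ∘ Fin.castSucc) a) := by
    refine (hmle.and hE2).ex.congr' (fun g => ?_)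
    have e3 : ∀ a : M, (Fin.snoc g a ∘ Fin.castSucc ∘ Fin.castSucc) = g ∘ Fin.castSucc := by
      intro a
      funext i
      simp [Fin.snoc_castSucc]
    constructor
    · rintro ⟨a, ha1, ha2⟩
      rw [Fin.snoc_last, Fin.snoc_castSucc] at ha1
      rw [e3, Fin.snoc_last] at ha2
      exact ⟨a, ha1, ha2⟩
    · rintro ⟨a, ha1, ha2⟩
      refine ⟨a, ?_, ?_⟩
      · rwa [Fin.snoc_last, Fin.snoc_castSucc]
      · rwa [e3, Fin.snoc_last]
  refine (hE.imp hC).all.congr' (fun h => ?_)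
  constructor
  · intro hh x hx
    have := hh x
    rw [Fin.snoc_comp_castSucc, Fin.snoc_last, Fin.snoc_castSucc] at this
    exact this hx
  · intro hh x
    rw [Fin.snoc_comp_castSucc, Fin.snoc_last, Fin.snoc_castSucc]
    exact hh x

end DefP
end Superminimal6
section Superminimal7
set_option linter.unusedSectionVars false
set_option linter.unnecessarySimpa false
open FirstOrder Language Set

variable {M : Type*} [ArithData M] {A : Set M}

/-- Definability of the "good bound" predicate, one free variable version. -/
lemma defp_goodTop (n : ℕ) (D : (Fin n → M) → M → Prop)
    (hD : DefP A (n+1) (fun g => D (g ∘ Fin.castSucc) (g (Fin.last n)))) (z : M) (hz : z ∈ A) :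
    DefP A 1 (fun f => ∀ v : Fin n → M, (∀ i, mle (v i) z) →
      ∀ x, D v x → ∃ x', mle x' (f 0) ∧ D v x') := by
  set E : (Fin (1+n) → M) → M → Prop :=
    fun h x => D (fun i => h ⟨1 + (i : ℕ), by omega⟩) x with hEdef
  have hE : DefP A ((1+n)+1) (fun g => E (g ∘ Fin.castSucc) (g (Fin.last (1+n)))) := by
    have hτ := hD.reindex (fun i : Fin (n+1) =>
      if hi : (i : ℕ) < n then (⟨1 + (i : ℕ), by omega⟩ : Fin ((1+n)+1)) else Fin.last (1+n))
    refine hτ.congr' (fun g => ?_)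
    have harg : ((g ∘ fun i : Fin (n+1) =>
        if hi : (i : ℕ) < n then (⟨1 + (i : ℕ), by omega⟩ : Fin ((1+n)+1))
        else Fin.last (1+n)) ∘ Fin.castSucc)
        = (fun i : Fin n => (g ∘ Fin.castSucc) ⟨1 + (i : ℕ), by omega⟩) := by
      funext i
      simp only [Function.comp_apply]
      congr 1
      rw [dif_pos (by simpa using i.isLt)]
      ext
      simp
    have hlast : (g ∘ fun i : Fin (n+1) =>
        if hi : (i : ℕ) < n then (⟨1 + (i : ℕ), by omega⟩ : Fin ((1+n)+1))
        else Fin.last (1+n)) (Fin.last n) = g (Fin.last ((1+n))) := by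
      simp only [Function.comp_apply]
      congr 1
      rw [dif_neg (by simp)]
    constructor
    · intro hh
      rw [harg, hlast] at hh
      exact hh
    · intro hh
      rw [harg, hlast]
      exact hh
  have hW := DefP.exwit E hE (⟨0, by omega⟩ : Fin (1+n))
  have hB := DefP.bforall z hz n (k := 1) _ hW
  refine hB.congr' (fun f => ?_)
  have key : ∀ v : Fin n → M,
      (fun i : Fin n => Fin.append f v ⟨1 + (i : ℕ), by omega⟩) = v := by
    intro v
    funext i
    have : (⟨1 + (i : ℕ), by omega⟩ : Fin (1+n)) = Fin.natAdd 1 i := by ext; simp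
    rw [this, Fin.append_right]
  have key0 : ∀ v : Fin n → M, Fin.append f v ⟨0, by omega⟩ = f 0 := by
    intro v
    have : (⟨0, by omega⟩ : Fin (1+n)) = Fin.castAdd n (0 : Fin 1) := by ext; simp
    rw [this, Fin.append_left]
  constructor
  · intro hh v hv x hx
    have := hh v hv x
    rw [hEdef] at this
    simp only at this
    rw [key v, key0 v] at this
    exact this hx
  · intro hh v hv x
    rw [hEdef]
    simp only
    rw [key v, key0 v]
    exact hh v hv x

/-- Definability of the "good bound" predicate, with an extra plugged coordinate. -/
lemma defp_goodStep (n : ℕ) (D : (Fin (n+1) → M) → M → Prop)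
    (hD : DefP A (n+2) (fun g => D (g ∘ Fin.castSucc) (g (Fin.last (n+1))))) (z : M)
    (hz : z ∈ A) :
    DefP A 2 (fun p => ∀ v : Fin n → M, (∀ i, mle (v i) z) →
      ∀ x, D (Fin.snoc v (p 0)) x → ∃ x', mle x' (p 1) ∧ D (Fin.snoc v (p 0)) x') := by
  set E : (Fin (2+n) → M) → M → Prop :=
    fun h x => D (Fin.snoc (fun i => h ⟨2 + (i : ℕ), by omega⟩) (h ⟨0, by omega⟩)) x with hEdef
  have hE : DefP A ((2+n)+1) (fun g => E (g ∘ Fin.castSucc) (g (Fin.last (2+n)))) := by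
    have hτ := hD.reindex (fun i : Fin (n+2) =>
      if hi : (i : ℕ) < n then (⟨2 + (i : ℕ), by omega⟩ : Fin ((2+n)+1))
      else if hi2 : (i : ℕ) = n then ⟨0, by omega⟩ else Fin.last (2+n))
    refine hτ.congr' (fun g => ?_)
    have harg : ((g ∘ fun i : Fin (n+2) =>
        if hi : (i : ℕ) < n then (⟨2 + (i : ℕ), by omega⟩ : Fin ((2+n)+1))
        else if hi2 : (i : ℕ) = n then ⟨0, by omega⟩ else Fin.last (2+n)) ∘ Fin.castSucc)
        = Fin.snoc (fun i : Fin n => (g ∘ Fin.castSucc) ⟨2 + (i : ℕ), by omega⟩)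
            ((g ∘ Fin.castSucc) ⟨0, by omega⟩) := by
      funext i
      refine Fin.lastCases ?_ (fun i0 => ?_) i
      · simp only [Function.comp_apply, Fin.snoc_last]
        have h1 : ((Fin.castSucc (Fin.last n) : Fin (n+2)) : ℕ) = n := by simp
        rw [dif_neg (by omega), dif_pos h1]
        rfl
      · simp only [Function.comp_apply, Fin.snoc_castSucc]
        rw [dif_pos (by simpa using i0.isLt)]
        rfl
    have hlast : (g ∘ fun i : Fin (n+2) =>
        if hi : (i : ℕ) < n then (⟨2 + (i : ℕ), by omega⟩ : Fin ((2+n)+1))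
        else if hi2 : (i : ℕ) = n then ⟨0, by omega⟩ else Fin.last (2+n))
        (Fin.last (n+1)) = g (Fin.last (2+n)) := by
      simp only [Function.comp_apply]
      have h1 : ((Fin.last (n+1) : Fin (n+2)) : ℕ) = n + 1 := by simp
      rw [dif_neg (by omega), dif_neg (by omega)]
    constructor
    · intro hh
      rw [harg, hlast] at hh
      exact hh
    · intro hh
      rw [harg, hlast]
      exact hh
  have hW := DefP.exwit E hE (⟨1, by omega⟩ : Fin (2+n))
  have hB := DefP.bforall z hz n (k := 2) _ hW
  refine hB.congr' (fun p => ?_)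
  have key : ∀ v : Fin n → M,
      (fun i : Fin n => Fin.append p v ⟨2 + (i : ℕ), by omega⟩) = v := by
    intro v
    funext i
    have : (⟨2 + (i : ℕ), by omega⟩ : Fin (2+n)) = Fin.natAdd 2 i := by ext; simp
    rw [this, Fin.append_right]
  have key0 : ∀ v : Fin n → M, Fin.append p v ⟨0, by omega⟩ = p 0 := by
    intro v
    have : (⟨0, by omega⟩ : Fin (2+n)) = Fin.castAdd n (0 : Fin 2) := by ext; simp
    rw [this, Fin.append_left]
  have key1 : ∀ v : Fin n → M, Fin.append p v ⟨1, by omega⟩ = p 1 := by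
    intro v
    have : (⟨1, by omega⟩ : Fin (2+n)) = Fin.castAdd n (1 : Fin 2) := by ext; simp
    rw [this, Fin.append_left]
  constructor
  · intro hh v hv x hx
    have := hh v hv x
    rw [hEdef] at this
    simp only at this
    rw [key v, key0 v, key1 v] at this
    exact this hx
  · intro hh v hv x
    rw [hEdef]
    simp only
    rw [key v, key0 v, key1 v]
    exact hh v hv x

namespace SMaux

variable (hPA : IsPAModel M)
include hPA

/-- n-dimensional bounding. -/
lemma sm_bnd : ∀ (n : ℕ) (D : (Fin n → M) → M → Prop),
    DefP (Set.univ : Set M) (n+1) (fun g => D (g ∘ Fin.castSucc) (g (Fin.last n))) →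
    ∀ z : M, ∃ W : M, ∀ u : Fin n → M, (∀ i, mle (u i) z) →
      ∀ x, D u x → ∃ x', mle x' W ∧ D u x' := by
  intro n
  induction n with
  | zero =>
    intro D _ z
    by_cases hex : ∃ x, D Fin.elim0 x
    · obtain ⟨x0, hx0⟩ := hex
      refine ⟨x0, fun u _ x hx => ?_⟩
      have hu : u = Fin.elim0 := Subsingleton.elim _ _
      subst hu
      exact ⟨x0, mle_refl x0, hx0⟩
    · refine ⟨0, fun u _ x hx => ?_⟩
      have hu : u = Fin.elim0 := Subsingleton.elim _ _
      subst hu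
      exact absurd ⟨x, hx⟩ hex
  | succ n IH =>
    intro D hD z
    have hplug : ∀ u : M, DefP (Set.univ : Set M) (n+1)
        (fun g => D (Fin.snoc (g ∘ Fin.castSucc) u) (g (Fin.last n))) := by
      intro u
      have h1 := hD.reindex (⇑(Equiv.swap (Fin.castSucc (Fin.last n)) (Fin.last (n+1))))
      have h2 := h1.plug u (Set.mem_univ u)
      refine h2.congr' (fun g => ?_)
      set σ := Equiv.swap (Fin.castSucc (Fin.last n)) (Fin.last (n+1))
      have ha : ((Fin.snoc g u ∘ ⇑σ) ∘ Fin.castSucc) = Fin.snoc (g ∘ Fin.castSucc) u := by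
        funext i
        refine Fin.lastCases ?_ (fun i0 => ?_) i
        · simp only [Function.comp_apply, Fin.snoc_last]
          have : σ (Fin.castSucc (Fin.last n)) = Fin.last (n+1) := Equiv.swap_apply_left _ _
          rw [this, Fin.snoc_last]
        · simp only [Function.comp_apply, Fin.snoc_castSucc]
          have hne1 : Fin.castSucc (Fin.castSucc i0) ≠ Fin.castSucc (Fin.last n) := by
            simp only [ne_eq, Fin.castSucc_inj]
            exact Fin.ne_of_lt (Fin.castSucc_lt_last i0)
          have hne2 : Fin.castSucc (Fin.castSucc i0) ≠ Fin.last (n+1) :=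
            Fin.ne_of_lt (Fin.castSucc_lt_last _)
          have : σ (Fin.castSucc (Fin.castSucc i0)) = Fin.castSucc (Fin.castSucc i0) :=
            Equiv.swap_apply_of_ne_of_ne hne1 hne2
          rw [this, Fin.snoc_castSucc]
      have hb : (Fin.snoc g u ∘ ⇑σ) (Fin.last (n+1)) = g (Fin.last n) := by
        simp only [Function.comp_apply]
        have : σ (Fin.last (n+1)) = Fin.castSucc (Fin.last n) := Equiv.swap_apply_right _ _
        rw [this, Fin.snoc_castSucc]
      constructor
      · intro hh
        rw [ha, hb] at hh
        exact hh
      · intro hh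
        rw [ha, hb]
        exact hh
    have hG := defp_goodStep n D hD z (Set.mem_univ z)
    have htot : ∀ u : M, ∃ w : M, ∀ v : Fin n → M, (∀ i, mle (v i) z) →
        ∀ x, D (Fin.snoc v u) x → ∃ x', mle x' w ∧ D (Fin.snoc v u) x' := by
      intro u
      exact IH (fun v x => D (Fin.snoc v u) x) (hplug u) z
    have hG2 : DefP (Set.univ : Set M) 2 (fun f : Fin 2 → M =>
        ∀ v : Fin n → M, (∀ i, mle (v i) z) →
          ∀ x, D (Fin.snoc v (f 0)) x → ∃ x', mle x' (f 1) ∧ D (Fin.snoc v (f 0)) x') := hG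
    obtain ⟨w0, hw0⟩ := sm_bound hPA _ hG2 htot z
    refine ⟨w0, fun u hu x hx => ?_⟩
    obtain ⟨w, hww0, hGw⟩ := hw0 (u (Fin.last n)) (hu _)
    have hsn : Fin.snoc (u ∘ Fin.castSucc) (u (Fin.last n)) = u :=
      fin_snoc_comp_castSucc_last u
    have h5 := hGw (u ∘ Fin.castSucc) (fun i => hu _) x (by rwa [hsn])
    obtain ⟨x', hx'w, hx'D⟩ := h5
    rw [hsn] at hx'D
    exact ⟨x', mle_trans hPA hx'w hww0, hx'D⟩

end SMaux
end Superminimal7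
section Superminimal8
set_option linter.unusedSectionVars false
set_option linter.unnecessarySimpa false
open FirstOrder Language Set

variable {M : Type*} [ArithData M] {A : Set M}

lemma DefP.mono {n : ℕ} {P : (Fin n → M) → Prop} {B : Set M} (h : DefP A n P) (hAB : A ⊆ B) :
    DefP B n P := Set.Definable.mono h hAB

lemma defp_le_const {m : M} (hm : m ∈ A) : DefP A 1 (fun f : Fin 1 → M => mle (f 0) m) := by
  have h1 : DefP A 2 (fun p => p 1 = m ∧ mle (p 0) (p 1)) :=
    (((defp_const hm).reindex (fun _ : Fin 1 => (1 : Fin 2))).congr' (fun p => Iff.rfl)).and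
      defp_mle
  refine h1.ex.congr' (fun p => ?_)
  have e0 : ∀ b : M, (Fin.snoc p b : Fin 2 → M) 0 = p 0 := fun b => by
    simp +decide [Fin.snoc]
    try exact rfl
  have e1 : ∀ b : M, (Fin.snoc p b : Fin 2 → M) 1 = b := fun b => by simp +decide [Fin.snoc]
  constructor
  · rintro ⟨b, hb1, hb2⟩
    rw [e0, e1] at hb2
    rw [e1] at hb1
    rwa [hb1] at hb2
  · intro hp
    exact ⟨m, by rw [e1], by rw [e0, e1]; exact hp⟩

lemma scl_mem_iff {x : M} : x ∈ Scl M A ↔ DefP A 1 (fun f => f 0 = x) := Iff.rfl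

lemma scl_self (a : M) : a ∈ Scl M ({a} : Set M) :=
  scl_mem_iff.2 (defp_const rfl)

lemma scl_zero_mem : (0 : M) ∈ Scl M A := scl_mem_iff.2 defp_zero

lemma scl_one_mem : (1 : M) ∈ Scl M A := scl_mem_iff.2 defp_one

/-- The bridge lemma: definability from a singleton parameter set, via a parameter-free
binary relation. -/
lemma scl_bridge {x y : M} (h : y ∈ Scl M ({x} : Set M)) :
    ∃ R : M → M → Prop, DefP (∅ : Set M) 2 (fun f => R (f 0) (f 1)) ∧ ∀ v, (R x v ↔ v = y) := by
  rw [scl_mem_iff] at h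
  rw [DefP, Set.definable_iff_exists_formula_sum] at h
  obtain ⟨φ, hφ⟩ := h
  classical
  set ρ : ↥({x} : Set M) ⊕ Fin 1 → Fin 2 := Sum.elim (fun _ => 0) (fun _ => 1) with hρ
  refine ⟨fun u v => (φ.relabel ρ).Realize ![u, v], ?_, ?_⟩
  · rw [DefP, Set.empty_definable_iff]
    refine ⟨φ.relabel ρ, ?_⟩
    ext f
    have hf : ![f 0, f 1] = f := by
      funext i
      fin_cases i <;> rfl
    simp only [Set.mem_setOf_eq]
    rw [hf]
  · intro v
    have h1 : (φ.relabel ρ).Realize (M := M) ![x, v] ↔ φ.Realize (![x, v] ∘ ρ) := by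
      rw [Formula.realize_relabel]
    have h2 : ![x, v] ∘ ρ = Sum.elim (fun s : ↥({x} : Set M) => (s : M)) (fun _ => v) := by
      funext s
      rcases s with s | i
      · have := s.2
        rw [Set.mem_singleton_iff] at this
        simp [hρ, this]
      · simp [hρ]
    have h3 : (fun _ : Fin 1 => v) ∈ {f : Fin 1 → M | f 0 = y} ↔ v = y := Iff.rfl
    show (φ.relabel ρ).Realize ![x, v] ↔ v = y
    rw [h1, h2]
    rw [hφ] at h3
    rw [← h3]
    rfl

lemma scl_trans {a x y : M} (hx : x ∈ Scl M ({a} : Set M)) (hy : y ∈ Scl M ({x} : Set M)) :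
    y ∈ Scl M ({a} : Set M) := by
  obtain ⟨R, hRdef, hR⟩ := scl_bridge hy
  rw [scl_mem_iff] at hx ⊢
  have c1 : DefP ({a} : Set M) 2 (fun g => g 1 = x) :=
    (hx.reindex (fun _ : Fin 1 => (1 : Fin 2))).congr' (fun g => Iff.rfl)
  have c2 : DefP ({a} : Set M) 2 (fun g => R (g 1) (g 0)) :=
    ((hRdef.mono (Set.empty_subset _)).reindex ![1, 0]).congr'
      (fun g => by simp [Function.comp])
  refine (c1.and c2).ex.congr' (fun f => ?_)
  have e0 : ∀ b : M, (Fin.snoc f b : Fin 2 → M) 0 = f 0 := fun b => by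
    simp +decide [Fin.snoc]
    try exact rfl
  have e1 : ∀ b : M, (Fin.snoc f b : Fin 2 → M) 1 = b := fun b => by simp +decide [Fin.snoc]
  constructor
  · rintro ⟨b, hb1, hb2⟩
    rw [e1] at hb1
    rw [e0, e1] at hb2
    rw [hb1] at hb2
    exact (hR _).1 hb2
  · intro hf
    refine ⟨x, by rw [e1], ?_⟩
    rw [e0, e1]
    exact (hR _).2 hf

lemma scl_univ_trans {a b : M} (hb : Scl M ({b} : Set M) = Set.univ)
    (hba : b ∈ Scl M ({a} : Set M)) : Scl M ({a} : Set M) = Set.univ := by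
  ext y
  simp only [Set.mem_univ, iff_true]
  have : y ∈ Scl M ({b} : Set M) := by rw [hb]; trivial
  exact scl_trans hba this

lemma scl_binop {m : M} (op : M → M → M)
    (hop : DefP ({m} : Set M) 3 (fun g => op (g 0) (g 1) = g 2)) {x y : M}
    (hx : x ∈ Scl M ({m} : Set M)) (hy : y ∈ Scl M ({m} : Set M)) :
    op x y ∈ Scl M ({m} : Set M) := by
  rw [scl_mem_iff] at hx hy ⊢
  have c1 : DefP ({m} : Set M) 3 (fun g => g 1 = x) :=
    (hx.reindex (fun _ : Fin 1 => (1 : Fin 3))).congr' (fun g => Iff.rfl)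
  have c2 : DefP ({m} : Set M) 3 (fun g => g 2 = y) :=
    (hy.reindex (fun _ : Fin 1 => (2 : Fin 3))).congr' (fun g => Iff.rfl)
  have c3 : DefP ({m} : Set M) 3 (fun g => op (g 1) (g 2) = g 0) :=
    (hop.reindex ![1, 2, 0]).congr' (fun g => by simp [Function.comp])
  have h4 := ((c1.and c2).and c3).ex
  have e0 : ∀ (p : Fin 2 → M) (b : M), (Fin.snoc p b : Fin 3 → M) 0 = p 0 := fun p b => by
    simp +decide [Fin.snoc]
    try exact rfl
  have e1 : ∀ (p : Fin 2 → M) (b : M), (Fin.snoc p b : Fin 3 → M) 1 = p 1 := fun p b => by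
    simp +decide [Fin.snoc]
    try exact rfl
  have e2 : ∀ (p : Fin 2 → M) (b : M), (Fin.snoc p b : Fin 3 → M) 2 = b := fun p b => by
    simp +decide [Fin.snoc]
  have h5 : DefP ({m} : Set M) 2 (fun p => (p 1 = x ∧ op (p 1) y = p 0)) := by
    refine h4.congr' (fun p => ?_)
    constructor
    · rintro ⟨b, ⟨hb1, hb2⟩, hb3⟩
      rw [e1] at hb1
      rw [e2] at hb2
      rw [e0, e1] at hb3
      rw [hb2] at hb3
      exact ⟨hb1, hb3⟩
    · rintro ⟨h1, h2⟩
      refine ⟨y, ⟨?_, ?_⟩, ?_⟩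
      · rwa [e1]
      · rw [e2]
      · rw [e0, e1]
        exact h2
  refine h5.ex.congr' (fun f => ?_)
  have f0 : ∀ b : M, (Fin.snoc f b : Fin 2 → M) 0 = f 0 := fun b => by
    simp +decide [Fin.snoc]
    try exact rfl
  have f1 : ∀ b : M, (Fin.snoc f b : Fin 2 → M) 1 = b := fun b => by simp +decide [Fin.snoc]
  constructor
  · rintro ⟨b, hb1, hb2⟩
    rw [f1] at hb1
    rw [f1, f0] at hb2
    rw [hb1] at hb2
    exact hb2.symm
  · intro hf
    refine ⟨x, ?_, ?_⟩
    · rw [f1]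
    · rw [f1, f0]
      exact hf.symm

lemma scl_add_mem {m x y : M} (hx : x ∈ Scl M ({m} : Set M)) (hy : y ∈ Scl M ({m} : Set M)) :
    x + y ∈ Scl M ({m} : Set M) := scl_binop _ defp_add hx hy

lemma scl_mul_mem {m x y : M} (hx : x ∈ Scl M ({m} : Set M)) (hy : y ∈ Scl M ({m} : Set M)) :
    x * y ∈ Scl M ({m} : Set M) := scl_binop _ defp_mul hx hy

end Superminimal8
section Superminimal9
set_option linter.unusedSectionVars false
set_option linter.unnecessarySimpa false
open FirstOrder Language Set

variable {M : Type*} [ArithData M]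

namespace SMaux

variable (hPA : IsPAModel M)
include hPA

/-- The least element of a `{m}`-definable nonempty class is in `Scl {m}`. -/
lemma scl_least {m : M} (Good : M → Prop)
    (hdef : DefP ({m} : Set M) 1 (fun f => Good (f 0)))
    (hne : ∃ w, Good w) :
    ∃ W, Good W ∧ (∀ y, Good y → mle W y) ∧ W ∈ Scl M ({m} : Set M) := by
  obtain ⟨w0, hw0⟩ := hne
  obtain ⟨W, hW, hleast⟩ := sm_lnp hPA Good (hdef.mono (Set.subset_univ _)) hw0
  refine ⟨W, hW, hleast, ?_⟩
  rw [scl_mem_iff]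
  have h1 : DefP ({m} : Set M) 2 (fun g => g 1 < g 0 → ¬ Good (g 1)) :=
    ((defp_lt.reindex ![1, 0]).congr' (fun g => by simp [Function.comp])).imp
      ((hdef.reindex (fun _ : Fin 1 => (1 : Fin 2))).not)
  have h2 : DefP ({m} : Set M) 1 (fun f => ∀ w', w' < f 0 → ¬ Good w') := by
    refine h1.all.congr' (fun f => ?_)
    have e0 : ∀ b : M, (Fin.snoc f b : Fin 2 → M) 0 = f 0 := fun b => by
      simp +decide [Fin.snoc]
      try exact rfl
    have e1 : ∀ b : M, (Fin.snoc f b : Fin 2 → M) 1 = b := fun b => by simp +decide [Fin.snoc]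
    constructor
    · intro hh w' hlt
      have := hh w'
      rw [e0, e1] at this
      exact this hlt
    · intro hh b
      rw [e0, e1]
      exact hh b
  refine (hdef.and h2).congr' (fun f => ?_)
  constructor
  · rintro ⟨hg, hmin⟩
    have h3 : mle W (f 0) := hleast _ hg
    rcases h3 with h3 | h3
    · exact absurd hW (hmin W h3)
    · exact h3.symm
  · rintro rfl
    exact ⟨hW, fun w' hlt hGw' => not_lt_of_mle hPA (hleast w' hGw') hlt⟩

/-- Transfer: anything definable from a parameter `a ≤ m` is bounded by something
definable from `m`. -/
lemma scl_transfer {a m y : M} (ham : mle a m) (hy : y ∈ Scl M ({a} : Set M)) :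
    ∃ W, mle y W ∧ W ∈ Scl M ({m} : Set M) := by
  obtain ⟨R, hRdef, hR⟩ := scl_bridge hy
  classical
  set V : M → M → Prop := fun u v =>
    (R u v ∧ ∀ v', R u v' → v' = v) ∨
      ((¬ ∃ w, R u w ∧ ∀ v', R u v' → v' = w) ∧ v = 0) with hVdefn
  have hVdef : ∀ (B : Set M), DefP B 2 (fun f => V (f 0) (f 1)) := by
    intro B
    have hRB : DefP B 2 (fun f => R (f 0) (f 1)) := hRdef.mono (Set.empty_subset _)
    have p1 : DefP B 3 (fun g => R (g 0) (g 2) → g 2 = g 1) :=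
      ((hRB.reindex ![0, 2]).congr' (fun g => by simp [Function.comp])).imp
        ((defp_eq.reindex ![2, 1]).congr' (fun g => by simp [Function.comp]))
    have p2 : DefP B 2 (fun f => ∀ v', R (f 0) v' → v' = f 1) := by
      refine p1.all.congr' (fun f => ?_)
      have e0 : ∀ b : M, (Fin.snoc f b : Fin 3 → M) 0 = f 0 := fun b => by
        simp +decide [Fin.snoc]
        try exact rfl
      have e1 : ∀ b : M, (Fin.snoc f b : Fin 3 → M) 1 = f 1 := fun b => by
        simp +decide [Fin.snoc]
        try exact rfl
      have e2 : ∀ b : M, (Fin.snoc f b : Fin 3 → M) 2 = b := fun b => by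
        simp +decide [Fin.snoc]
      constructor
      · intro hh v' hv'
        have := hh v'
        rw [e0, e1, e2] at this
        exact this hv'
      · intro hh b
        rw [e0, e1, e2]
        exact hh b
    -- p3 : ∃ w, R (f 0) w ∧ ∀ v', R (f 0) v' → v' = w   (over context (u,v))
    have q1 : DefP B 4 (fun g => R (g 0) (g 3) → g 3 = g 2) :=
      ((hRB.reindex ![0, 3]).congr' (fun g => by simp [Function.comp])).imp
        ((defp_eq.reindex ![3, 2]).congr' (fun g => by simp [Function.comp]))
    have q2 : DefP B 3 (fun g => ∀ v', R (g 0) v' → v' = g 2) := by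
      refine q1.all.congr' (fun g => ?_)
      have e0 : ∀ b : M, (Fin.snoc g b : Fin 4 → M) 0 = g 0 := fun b => by
        simp +decide [Fin.snoc]
        try exact rfl
      have e2 : ∀ b : M, (Fin.snoc g b : Fin 4 → M) 2 = g 2 := fun b => by
        simp +decide [Fin.snoc]
        try exact rfl
      have e3 : ∀ b : M, (Fin.snoc g b : Fin 4 → M) 3 = b := fun b => by
        simp +decide [Fin.snoc]
      constructor
      · intro hh v' hv'
        have := hh v'
        rw [e0, e2, e3] at this
        exact this hv'
      · intro hh b
        rw [e0, e2, e3]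
        exact hh b
    have q3 : DefP B 3 (fun g => R (g 0) (g 2) ∧ ∀ v', R (g 0) v' → v' = g 2) :=
      ((hRB.reindex ![0, 2]).congr' (fun g => by simp [Function.comp])).and q2
    have p3 : DefP B 2 (fun f => ∃ w, R (f 0) w ∧ ∀ v', R (f 0) v' → v' = w) := by
      refine q3.ex.congr' (fun f => ?_)
      have e0 : ∀ b : M, (Fin.snoc f b : Fin 3 → M) 0 = f 0 := fun b => by
        simp +decide [Fin.snoc]
        try exact rfl
      have e2 : ∀ b : M, (Fin.snoc f b : Fin 3 → M) 2 = b := fun b => by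
        simp +decide [Fin.snoc]
      constructor
      · rintro ⟨b, hb1, hb2⟩
        rw [e0, e2] at hb1
        refine ⟨b, hb1, fun v' hv' => ?_⟩
        have := hb2 v'
        rw [e0, e2] at this
        exact this hv'
      · rintro ⟨w, hw1, hw2⟩
        refine ⟨w, ?_, ?_⟩
        · rw [e0, e2]
          exact hw1
        · intro v'
          rw [e0, e2]
          exact hw2 v'
    have p4 : DefP B 2 (fun f => f 1 = 0) :=
      (defp_zero.reindex (fun _ : Fin 1 => (1 : Fin 2))).congr' (fun f => Iff.rfl)
    exact ((hRB.and p2).or ((p3.not).and p4)).congr' (fun f => Iff.rfl)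
  have htot : ∀ u : M, ∃ v, V u v := by
    intro u
    by_cases hex : ∃ w, R u w ∧ ∀ v', R u v' → v' = w
    · obtain ⟨w, hw1, hw2⟩ := hex
      exact ⟨w, Or.inl ⟨hw1, hw2⟩⟩
    · exact ⟨0, Or.inr ⟨hex, rfl⟩⟩
  obtain ⟨w1, hw1⟩ := sm_bound hPA V (hVdef _) htot m
  set Good : M → Prop := fun w => ∀ u, mle u m → ∃ v, mle v w ∧ V u v with hGdefn
  have hGooddef : DefP ({m} : Set M) 1 (fun f => Good (f 0)) := by
    -- context (w, u, v)
    have r1 : DefP ({m} : Set M) 3 (fun g => mle (g 2) (g 0) ∧ V (g 1) (g 2)) :=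
      ((defp_mle.reindex ![2, 0]).congr' (fun g => by simp [Function.comp])).and
        (((hVdef _).reindex ![1, 2]).congr' (fun g => by simp [Function.comp]))
    have r2 : DefP ({m} : Set M) 2 (fun p => ∃ v, mle v (p 0) ∧ V (p 1) v) := by
      refine r1.ex.congr' (fun p => ?_)
      have e0 : ∀ b : M, (Fin.snoc p b : Fin 3 → M) 0 = p 0 := fun b => by
        simp +decide [Fin.snoc]
        try exact rfl
      have e1 : ∀ b : M, (Fin.snoc p b : Fin 3 → M) 1 = p 1 := fun b => by
        simp +decide [Fin.snoc]
        try exact rfl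
      have e2 : ∀ b : M, (Fin.snoc p b : Fin 3 → M) 2 = b := fun b => by
        simp +decide [Fin.snoc]
      constructor
      · rintro ⟨b, hb1, hb2⟩
        rw [e2, e0] at hb1
        rw [e1, e2] at hb2
        exact ⟨b, hb1, hb2⟩
      · rintro ⟨v, hv1, hv2⟩
        refine ⟨v, ?_, ?_⟩
        · rw [e2, e0]
          exact hv1
        · rw [e1, e2]
          exact hv2
    have r3 : DefP ({m} : Set M) 2 (fun p => mle (p 1) m) :=
      (((defp_le_const (Set.mem_singleton m)) : DefP ({m} : Set M) 1 _).reindex (fun _ : Fin 1 => (1 : Fin 2))).congr' (fun p => Iff.rfl)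
    have r4 : DefP ({m} : Set M) 2 (fun p => mle (p 1) m → ∃ v, mle v (p 0) ∧ V (p 1) v) :=
      r3.imp r2
    refine r4.all.congr' (fun f => ?_)
    have e0 : ∀ b : M, (Fin.snoc f b : Fin 2 → M) 0 = f 0 := fun b => by
      simp +decide [Fin.snoc]
      try exact rfl
    have e1 : ∀ b : M, (Fin.snoc f b : Fin 2 → M) 1 = b := fun b => by simp +decide [Fin.snoc]
    constructor
    · intro hh u hu
      have := hh u
      rw [e0, e1] at this
      exact this hu
    · intro hh b
      rw [e0, e1]
      exact hh b
  obtain ⟨W, hGW, _, hWscl⟩ := scl_least hPA Good hGooddef ⟨w1, hw1⟩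
  refine ⟨W, ?_, hWscl⟩
  obtain ⟨v, hvW, hV⟩ := hGW a ham
  rcases hV with ⟨hRav, _⟩ | ⟨hnex, _⟩
  · have : v = y := (hR v).1 hRav
    rwa [this] at hvW
  · exfalso
    refine hnex ⟨y, (hR y).2 rfl, fun v' hv' => (hR v').1 hv'⟩

end SMaux
end Superminimal9
section Superminimal10
set_option linter.unusedSectionVars false
set_option linter.unnecessarySimpa false
open FirstOrder Language Set

variable {M : Type*} [ArithData M]

/-- The candidate elementary initial segment: everything bounded by an element definable
from some non-generator. -/
def Nset (M : Type*) [ArithData M] : Set M :=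
  {x | ∃ a y : M, Scl M ({a} : Set M) ≠ Set.univ ∧ y ∈ Scl M ({a} : Set M) ∧ mle x y}

lemma N_mem_of_nongen {x : M} (h : Scl M ({x} : Set M) ≠ Set.univ) : x ∈ Nset M :=
  ⟨x, x, h, scl_self x, Or.inr rfl⟩

lemma defp_realize {n : ℕ} (φ : Larith.BoundedFormula Empty n) (B : Set M) :
    DefP B n (fun g => φ.Realize (default : Empty → M) g) := by
  refine DefP.mono (?_ : DefP (∅ : Set M) n _) (Set.empty_subset B)
  rw [DefP, Set.empty_definable_iff]
  refine ⟨(φ.toFormula).relabel (Sum.elim (fun e : Empty => e.elim) id), ?_⟩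
  ext g
  simp only [Set.mem_setOf_eq, Formula.realize_relabel, BoundedFormula.realize_toFormula]
  have h1 : ((g ∘ Sum.elim (fun e : Empty => e.elim) id) ∘ Sum.inl) = (default : Empty → M) :=
    funext (fun e => e.elim)
  have h2 : ((g ∘ Sum.elim (fun e : Empty => e.elim) id) ∘ Sum.inr) = g := rfl
  rw [h1, h2]

namespace SMaux

variable (hPA : IsPAModel M)
include hPA

lemma N_bound {c : M} (hc : ∀ b : M, c < b → Scl M ({b} : Set M) = Set.univ) {x : M}
    (hx : x ∈ Nset M) : mle x c := by
  obtain ⟨a, y, hane, hy, hxy⟩ := hx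
  refine mle_trans hPA hxy (mle_of_not_lt hPA (fun hlt => ?_))
  exact hane (scl_univ_trans (hc y hlt) hy)

lemma N_not_top {c : M} (hc : ∀ b : M, c < b → Scl M ({b} : Set M) = Set.univ) :
    (c + 1) ∉ Nset M := by
  intro hmem
  exact paLtIrrefl hPA c (lt_of_lt_of_mle hPA (lt_succ_self hPA c) (N_bound hPA hc hmem))

lemma N_down {a : M} (ha : a ∈ Nset M) {b : M} (hb : mle b a) : b ∈ Nset M := by
  obtain ⟨a', y, h1, h2, h3⟩ := ha
  exact ⟨a', y, h1, h2, mle_trans hPA hb h3⟩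

lemma N_pairbound {x1 x2 : M} (h1 : x1 ∈ Nset M) (h2 : x2 ∈ Nset M) :
    ∃ m z1 z2 : M, Scl M ({m} : Set M) ≠ Set.univ ∧ z1 ∈ Scl M ({m} : Set M) ∧
      z2 ∈ Scl M ({m} : Set M) ∧ mle x1 z1 ∧ mle x2 z2 := by
  obtain ⟨a1, y1, ha1, hy1, hxy1⟩ := h1
  obtain ⟨a2, y2, ha2, hy2, hxy2⟩ := h2
  rcases paTri hPA a1 a2 with hlt | heq | hlt
  · obtain ⟨W1, hW1, hW1s⟩ := scl_transfer hPA (Or.inl hlt) hy1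
    exact ⟨a2, W1, y2, ha2, hW1s, hy2, mle_trans hPA hxy1 hW1, hxy2⟩
  · subst heq
    exact ⟨a1, y1, y2, ha1, hy1, hy2, hxy1, hxy2⟩
  · obtain ⟨W2, hW2, hW2s⟩ := scl_transfer hPA (Or.inl hlt) hy2
    exact ⟨a1, y1, W2, ha1, hy1, hW2s, hxy1, mle_trans hPA hxy2 hW2⟩

lemma N_add {x1 x2 : M} (h1 : x1 ∈ Nset M) (h2 : x2 ∈ Nset M) : x1 + x2 ∈ Nset M := by
  obtain ⟨m, z1, z2, hm, hz1, hz2, hb1, hb2⟩ := N_pairbound hPA h1 h2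
  exact ⟨m, z1 + z2, hm, scl_add_mem hz1 hz2, mle_add_mono hPA hb1 hb2⟩

lemma N_mul {x1 x2 : M} (h1 : x1 ∈ Nset M) (h2 : x2 ∈ Nset M) : x1 * x2 ∈ Nset M := by
  obtain ⟨m, z1, z2, hm, hz1, hz2, hb1, hb2⟩ := N_pairbound hPA h1 h2
  exact ⟨m, z1 * z2, hm, scl_mul_mem hz1 hz2, mle_mul_mono hPA hb1 hb2⟩

lemma N_params (h0 : Scl M ({(0 : M)} : Set M) ≠ Set.univ) :
    ∀ (n : ℕ) (y : Fin n → M), (∀ i, y i ∈ Nset M) →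
      ∃ m Z : M, Scl M ({m} : Set M) ≠ Set.univ ∧ Z ∈ Scl M ({m} : Set M) ∧
        ∀ i, mle (y i) Z := by
  intro n
  induction n with
  | zero => exact fun y _ => ⟨0, 0, h0, scl_zero_mem, fun i => i.elim0⟩
  | succ n IH =>
    intro y hy
    obtain ⟨m, Z, hm, hZ, hbd⟩ := IH (y ∘ Fin.castSucc) (fun i => hy _)
    obtain ⟨a, t, ha, ht, hyt⟩ := hy (Fin.last n)
    rcases paTri hPA m a with hlt | heq | hlt
    · obtain ⟨W1, hW1, hW1s⟩ := scl_transfer hPA (Or.inl hlt) hZ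
      refine ⟨a, W1 + t, ha, scl_add_mem hW1s ht, fun i => ?_⟩
      refine Fin.lastCases ?_ (fun j => ?_) i
      · exact mle_trans hPA hyt (mle_add_left hPA t W1)
      · exact mle_trans hPA (mle_trans hPA (hbd j) hW1) (mle_add_right hPA W1 t)
    · subst heq
      refine ⟨m, Z + t, hm, scl_add_mem hZ ht, fun i => ?_⟩
      refine Fin.lastCases ?_ (fun j => ?_) i
      · exact mle_trans hPA hyt (mle_add_left hPA t Z)
      · exact mle_trans hPA (hbd j) (mle_add_right hPA Z t)
    · obtain ⟨W2, hW2, hW2s⟩ := scl_transfer hPA (Or.inl hlt) ht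
      refine ⟨m, Z + W2, hm, scl_add_mem hZ hW2s, fun i => ?_⟩
      refine Fin.lastCases ?_ (fun j => ?_) i
      · exact mle_trans hPA (mle_trans hPA hyt hW2) (mle_add_left hPA W2 Z)
      · exact mle_trans hPA (hbd j) (mle_add_right hPA Z W2)

lemma N_tv (h0 : Scl M ({(0 : M)} : Set M) ≠ Set.univ) (n : ℕ)
    (φ : Larith.BoundedFormula Empty (n + 1)) (y : Fin n → M) (hy : ∀ i, y i ∈ Nset M)
    (a : M) (ha : φ.Realize (default : Empty → M) (Fin.snoc y a)) :
    ∃ b : M, b ∈ Nset M ∧ φ.Realize (default : Empty → M) (Fin.snoc y b) := by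
  set D : (Fin n → M) → M → Prop := fun u b => φ.Realize (default : Empty → M) (Fin.snoc u b)
    with hDdefn
  have hDdef : ∀ B : Set M, DefP B (n+1)
      (fun g => D (g ∘ Fin.castSucc) (g (Fin.last n))) := by
    intro B
    refine (defp_realize φ B).congr' (fun g => ?_)
    rw [hDdefn]
    simp only
    rw [fin_snoc_comp_castSucc_last g]
  obtain ⟨m, Z, hm, hZ, hbound⟩ := N_params hPA h0 n y hy
  obtain ⟨W0, hW0⟩ := sm_bnd hPA n D (hDdef _) Z
  set Good : M → Prop := fun w => ∀ v : Fin n → M, (∀ i, mle (v i) Z) →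
    ∀ x, D v x → ∃ x', mle x' w ∧ D v x' with hGdefn
  have hGooddef : DefP ({Z} : Set M) 1 (fun f => Good (f 0)) :=
    defp_goodTop n D (hDdef _) Z (Set.mem_singleton Z)
  obtain ⟨W, hGW, _, hWZ⟩ := scl_least hPA Good hGooddef ⟨W0, hW0⟩
  have hWm : W ∈ Scl M ({m} : Set M) := scl_trans hZ hWZ
  obtain ⟨b, hbW, hDb⟩ := hGW y hbound a ha
  exact ⟨b, ⟨m, W, hm, hWm, hbW⟩, hDb⟩

end SMaux
end Superminimal10
/-- If all sufficiently large elements of a model of PA generate it, then the model is prime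
(generated by 0) or is a superminimal elementary end extension of a proper elementary
submodel. -/
theorem generation_implies_superminimal (M : Type*) [ArithData M] (hPA : IsPAModel M)
    (h : ∃ c : M, ∀ b : M, c < b → Scl M {b} = Set.univ) :
    Scl M {(0 : M)} = Set.univ ∨
      ∃ N : Larith.ElementarySubstructure M, (N : Set M) ≠ Set.univ ∧
        (∀ a : M, a ∈ N → ∀ b : M, b < a → b ∈ N) ∧
        (∀ b : M, b ∉ N → Scl M {b} = Set.univ) := by
  classical
  obtain ⟨c, hc⟩ := h
  by_cases h0 : Scl M ({(0 : M)} : Set M) = Set.univ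
  · exact Or.inl h0
  · refine Or.inr ?_
    have hfun : ∀ {k : ℕ} (f : Larith.Functions k),
        FirstOrder.Language.ClosedUnder f (Nset M) := by
      intro k f
      match k, f with
      | 0, f =>
        intro v _
        show (if @Eq (Fin 2) f 0 then (0 : M) else 1) ∈ Nset M
        by_cases hf : @Eq (Fin 2) f 0
        · rw [if_pos hf]
          exact N_mem_of_nongen h0
        · rw [if_neg hf]
          exact ⟨0, 1, h0, scl_one_mem, Or.inr rfl⟩
      | 2, f =>
        intro v hv
        show (if @Eq (Fin 2) f 0 then v 0 + v 1 else v 0 * v 1) ∈ Nset M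
        by_cases hf : @Eq (Fin 2) f 0
        · rw [if_pos hf]
          exact SMaux.N_add hPA (hv 0) (hv 1)
        · rw [if_neg hf]
          exact SMaux.N_mul hPA (hv 0) (hv 1)
      | 1, f => exact Empty.elim f
      | (n+3), f => exact Empty.elim f
    set S : Larith.Substructure M := ⟨Nset M, hfun⟩ with hSdef
    have htv : ∀ (n : ℕ) (φ : Larith.BoundedFormula Empty (n + 1)) (x : Fin n → S) (a : M),
        φ.Realize (default : Empty → M) (Fin.snoc ((↑) ∘ x) a : _ → M) →
        ∃ b : S, φ.Realize (default : Empty → M) (Fin.snoc ((↑) ∘ x) b : _ → M) := by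
      intro n φ x a ha
      obtain ⟨b, hbN, hbreal⟩ := SMaux.N_tv hPA h0 n φ ((↑) ∘ x) (fun i => show ((↑) ∘ x) i ∈ Nset M from (x i).2) a ha
      exact ⟨⟨b, hbN⟩, hbreal⟩
    refine ⟨S.toElementarySubstructure htv, ?_, ?_, ?_⟩
    · intro heq
      have : (c + 1) ∈ Nset M := by
        have : (c + 1) ∈ (S.toElementarySubstructure htv : Set M) := by
          rw [heq]; trivial
        exact this
      exact SMaux.N_not_top hPA hc this
    · intro a haN b hba
      exact SMaux.N_down hPA haN (Or.inl hba)
    · intro b hb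
      by_contra hne
      exact hb (N_mem_of_nongen hne)
end
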